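/- arXiv:1905.13484 — 4 statements merged into one kernel-verified Lean document; each statement's English description precedes it below -/
import Mathlib

section
/- Both inclusions in the chain Exh(φ₂) ⊆ Fin(φ₂) ⊆ 𝒵 are strict: {A ⊆ ℕ∖{0} : φ₂(A ∖ [0,n)) → 0} ⊊ {A ⊆ ℕ∖{0} : φ₂(A) < ∞} ⊊ {A ⊆ ℕ∖{0} : |A ∩ [1,n]|/n → 0}. -/
open Filter Topology ENNReal

/-- `λ_k = 2^{-n}` for `k ∈ [2^n, 2^{n+1})` (for `k ≥ 1`). -/
noncomputable def lam : ℕ → ℝ := fun k => (1 / 2 : ℝ) ^ (Nat.log 2 k)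

/-- The Schreier family `S₁ = {∅} ∪ {F ⊆ ℕ∖{0} finite nonempty : |F| ≤ min F}`;
note that `|F| ≤ min F` is equivalent to `∀ k ∈ F, |F| ≤ k`. -/
def S1 : Set (Finset ℕ) := {F | 0 ∉ F ∧ ∀ k ∈ F, F.card ≤ k}

/-- `φ₁(A) = sup_{F ∈ S₁} Σ_{k ∈ F ∩ A} λ_k`. -/
noncomputable def phi1 (A : Set ℕ) : ℝ≥0∞ :=
  ⨆ F ∈ S1, ∑ k ∈ F, A.indicator (fun k => ENNReal.ofReal (lam k)) k

/-- The second Schreier family: unions `E₁ ∪ ⋯ ∪ E_m` of nonempty members of `S₁`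
with `m ≤ min E₁` and `max E_j < min E_{j+1}`. -/
def S2 : Set (Finset ℕ) :=
  {F | F = ∅ ∨ ∃ (m : ℕ) (E : Fin (m + 1) → Finset ℕ),
    (∀ j, E j ∈ S1 ∧ (E j).Nonempty) ∧
    (∀ j k : Fin (m + 1), j < k → ∀ a ∈ E j, ∀ b ∈ E k, a < b) ∧
    (∀ a ∈ E 0, m + 1 ≤ a) ∧
    F = Finset.univ.biUnion E}

/-- `φ₂(A) = sup_{F ∈ S₂} Σ_{k ∈ F ∩ A} λ_k`. -/
noncomputable def phi2 (A : Set ℕ) : ℝ≥0∞ :=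
  ⨆ F ∈ S2, ∑ k ∈ F, A.indicator (fun k => ENNReal.ofReal (lam k)) k

section Chunks
open Finset

noncomputable def glam : ℕ → ℝ≥0∞ := fun k => ENNReal.ofReal (lam k)

lemma glam_eq (k : ℕ) : glam k = ENNReal.ofReal ((1/2 : ℝ) ^ (Nat.log 2 k)) := rfl

lemma phi2_eq (B : Set ℕ) : phi2 B = ⨆ F ∈ S2, ∑ k ∈ F, B.indicator glam k := rfl

lemma sum_le_phi2 (B : Set ℕ) {F : Finset ℕ} (hF : F ∈ S2) :
    ∑ k ∈ F, B.indicator glam k ≤ phi2 B := by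
  rw [phi2_eq]
  exact le_iSup₂ (f := fun F (_ : F ∈ S2) => ∑ k ∈ F, B.indicator glam k) F hF

lemma phi2_le_of_forall (B : Set ℕ) (c : ℝ≥0∞)
    (h : ∀ F ∈ S2, ∑ k ∈ F, B.indicator glam k ≤ c) : phi2 B ≤ c := by
  rw [phi2_eq]; exact iSup₂_le h

def chunk (e : ℕ → ℕ) (j : ℕ) : Finset ℕ := Finset.Ico (2^j) (2^j + 2^(e j))

def AA (e : ℕ → ℕ) : Set ℕ := {k | 4 ≤ k ∧ k < 2^(Nat.log 2 k) + 2^(e (Nat.log 2 k))}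

lemma zero_not_mem_AA (e : ℕ → ℕ) : 0 ∉ AA e := by
  intro h; exact absurd h.1 (by norm_num)

variable {e : ℕ → ℕ} {j k n q : ℕ}

lemma log_eq_of_mem_chunk (he : e j ≤ j) (hk : k ∈ chunk e j) : Nat.log 2 k = j := by
  rw [chunk, Finset.mem_Ico] at hk
  refine Nat.log_eq_of_pow_le_of_lt_pow hk.1 ?_
  calc k < 2^j + 2^(e j) := hk.2
    _ ≤ 2^j + 2^j := by gcongr <;> norm_num
    _ = 2^(j+1) := by ring

lemma chunk_subset_AA (he : ∀ j, e j ≤ j) (hj : 2 ≤ j) (hk : k ∈ chunk e j) : k ∈ AA e := by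
  have hlog := log_eq_of_mem_chunk (he j) hk
  rw [chunk, Finset.mem_Ico] at hk
  constructor
  · calc (4:ℕ) = 2^2 := by norm_num
      _ ≤ 2^j := Nat.pow_le_pow_right (by norm_num) hj
      _ ≤ k := hk.1
  · rw [hlog]; exact hk.2

lemma mem_chunk_of_mem_AA (hk : k ∈ AA e) :
    k ∈ chunk e (Nat.log 2 k) ∧ 2 ≤ Nat.log 2 k := by
  obtain ⟨h4, hlt⟩ := hk
  constructor
  · rw [chunk, Finset.mem_Ico]
    exact ⟨Nat.pow_log_le_self 2 (by omega), hlt⟩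
  · calc 2 = Nat.log 2 4 := (Nat.log_eq_of_pow_le_of_lt_pow (by norm_num) (by norm_num)).symm
      _ ≤ Nat.log 2 k := Nat.log_mono_right h4

lemma card_chunk : (chunk e j).card = 2^(e j) := by
  rw [chunk, Nat.card_Ico, Nat.add_sub_cancel_left]

lemma chunk_sum (B : Set ℕ) (he : e j ≤ j) (hB : ∀ k ∈ chunk e j, k ∈ B) :
    ∑ k ∈ chunk e j, B.indicator glam k = ENNReal.ofReal ((2:ℝ)^(e j) * (1/2)^j) := by
  have : ∀ k ∈ chunk e j, B.indicator glam k = ENNReal.ofReal ((1/2:ℝ)^j) := by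
    intro k hk
    rw [Set.indicator_of_mem (hB k hk), glam_eq, log_eq_of_mem_chunk he hk]
  rw [Finset.sum_congr rfl this, Finset.sum_const, card_chunk, nsmul_eq_mul,
    ← ENNReal.ofReal_natCast, ← ENNReal.ofReal_mul (by positivity)]
  norm_num

end Chunks
section LB
open Finset

variable {e : ℕ → ℕ} {j k n q : ℕ}

lemma disjoint_chunks (he : ∀ j, e j ≤ j) {j j' : ℕ} (h : j < j') :
    ∀ a ∈ chunk e j, ∀ b ∈ chunk e j', a < b := by
  intro a ha b hb
  simp only [chunk, Finset.mem_Ico] at ha hb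
  calc a < 2^j + 2^(e j) := ha.2
    _ ≤ 2^j + 2^j := by have := he j; gcongr <;> norm_num
    _ = 2^(j+1) := by ring
    _ ≤ 2^j' := Nat.pow_le_pow_right (by norm_num) h
    _ ≤ b := hb.1

lemma chunks_mem_S2 (he : ∀ j, e j ≤ j) (hn : 2 ≤ n) (hq1 : 1 ≤ q) (hq : q ≤ 2^n) :
    (Finset.Ico n (n+q)).biUnion (chunk e) ∈ S2 := by
  right
  obtain ⟨m, rfl⟩ : ∃ m, q = m + 1 := ⟨q - 1, by omega⟩
  refine ⟨m, fun l => chunk e (n + (l : ℕ)), ?_, ?_, ?_, ?_⟩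
  · intro l
    refine ⟨⟨?_, ?_⟩, ?_⟩
    · intro h0
      simp only [chunk, Finset.mem_Ico] at h0
      have : 0 < 2^(n + (((0:Fin (m+1)) : Fin (m+1)) : ℕ)) := pow_pos (by norm_num) _
      have h2 : 0 < (2:ℕ)^(n + (l : ℕ)) := pow_pos (by norm_num) _
      omega
    · intro k hk
      have hk' := hk
      simp only [chunk, Finset.mem_Ico] at hk'
      rw [card_chunk]
      calc 2^(e (n + (l:ℕ))) ≤ 2^(n + (l:ℕ)) := Nat.pow_le_pow_right (by norm_num) (he _)
        _ ≤ k := hk'.1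
    · refine Finset.nonempty_Ico.2 ?_
      have : 0 < 2^(e (n + (l:ℕ))) := by positivity
      omega
  · intro l l' hll'
    exact disjoint_chunks he (by omega)
  · intro a ha
    have ha' := ha
    simp only [chunk, Finset.mem_Ico] at ha'
    calc m + 1 ≤ 2^n := hq
      _ ≤ 2^(n + ((0 : Fin (m+1)) : ℕ)) := by simp
      _ ≤ a := ha'.1
  · ext a
    simp only [Finset.mem_biUnion, Finset.mem_Ico, Finset.mem_univ, true_and]
    constructor
    · rintro ⟨j, ⟨hj1, hj2⟩, hj3⟩
      exact ⟨⟨j - n, by omega⟩, by simpa [Nat.add_sub_cancel' hj1] using hj3⟩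
    · rintro ⟨l, hl⟩
      exact ⟨n + (l : ℕ), ⟨by omega, by have := l.2; omega⟩, hl⟩

lemma sum_chunks_le_phi2 (B : Set ℕ) (he : ∀ j, e j ≤ j) (hn : 2 ≤ n) (hq1 : 1 ≤ q)
    (hq : q ≤ 2^n) (hB : ∀ j ∈ Finset.Ico n (n+q), ∀ k ∈ chunk e j, k ∈ B) :
    ∑ j ∈ Finset.Ico n (n+q), ENNReal.ofReal ((2:ℝ)^(e j) * (1/2)^j) ≤ phi2 B := by
  have hdisj : (↑(Finset.Ico n (n+q)) : Set ℕ).PairwiseDisjoint (chunk e) := by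
    intro a _ b _ hab
    rcases lt_or_gt_of_ne hab with h | h
    · exact Finset.disjoint_left.2 fun x hx hx' =>
        absurd rfl (disjoint_chunks he h x hx x hx').ne
    · exact Finset.disjoint_left.2 fun x hx hx' =>
        absurd rfl (disjoint_chunks he h x hx' x hx).ne
  calc ∑ j ∈ Finset.Ico n (n+q), ENNReal.ofReal ((2:ℝ)^(e j) * (1/2)^j)
      = ∑ j ∈ Finset.Ico n (n+q), ∑ k ∈ chunk e j, B.indicator glam k := by
        refine Finset.sum_congr rfl fun j hj => ?_
        rw [chunk_sum B (he j) (hB j hj)]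
    _ = ∑ k ∈ (Finset.Ico n (n+q)).biUnion (chunk e), B.indicator glam k :=
        (Finset.sum_biUnion hdisj).symm
    _ ≤ phi2 B := sum_le_phi2 B (chunks_mem_S2 he hn hq1 hq)

end LB
section A4
open Finset

lemma real_pow_helper {s j : ℕ} (h : s ≤ j) : (2:ℝ)^(j - s) * (1/2)^j = (1/2)^s := by
  have hj : (1/2:ℝ)^j = (1/2)^(j-s) * (1/2)^s := by rw [← pow_add]; congr 1; omega
  rw [hj, ← mul_assoc, ← mul_pow]; norm_num

def e4 : ℕ → ℕ := fun j => j - (Nat.log 2 j + 1)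

lemma e4_le : ∀ j, e4 j ≤ j := fun j => Nat.sub_le _ _

noncomputable def A4 : Set ℕ := AA e4

lemma dyadic_sum (i' : ℕ) :
    ∑ j ∈ Finset.Ico (2^i') (2^(i'+1)), ENNReal.ofReal ((2:ℝ)^(e4 j) * (1/2)^j)
      = ENNReal.ofReal ((2:ℝ)^i' * (1/2)^(i'+1)) := by
  have hterm : ∀ j ∈ Finset.Ico (2^i') (2^(i'+1)),
      ENNReal.ofReal ((2:ℝ)^(e4 j) * (1/2)^j) = ENNReal.ofReal ((1/2:ℝ)^(i'+1)) := by
    intro j hj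
    rw [Finset.mem_Ico] at hj
    have hlog : Nat.log 2 j = i' := Nat.log_eq_of_pow_le_of_lt_pow hj.1 hj.2
    have hle : i' + 1 ≤ j := by
      have := Nat.lt_two_pow_self (n := i')
      omega
    rw [show e4 j = j - (i'+1) by simp [e4, hlog], real_pow_helper hle]
  rw [Finset.sum_congr rfl hterm, Finset.sum_const, Nat.card_Ico, nsmul_eq_mul,
    ← ENNReal.ofReal_natCast, ← ENNReal.ofReal_mul (by positivity)]
  congr 1
  have : (2:ℕ)^(i'+1) - 2^i' = 2^i' := by rw [pow_succ]; omega
  rw [this]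
  push_cast
  ring

lemma window_sum (i : ℕ) : ∀ M : ℕ,
    ∑ j ∈ Finset.Ico (2^i) (2^(i+M)), ENNReal.ofReal ((2:ℝ)^(e4 j) * (1/2)^j)
      = M * ENNReal.ofReal (1/2) := by
  intro M
  induction M with
  | zero => simp
  | succ M ih =>
    have hsplit : Finset.Ico ((2:ℕ)^i) (2^(i+M+1)) =
        Finset.Ico ((2:ℕ)^i) (2^(i+M)) ∪ Finset.Ico ((2:ℕ)^(i+M)) (2^(i+M+1)) := by
      rw [Finset.Ico_union_Ico_eq_Ico]
      · exact Nat.pow_le_pow_right (by norm_num) (by omega)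
      · exact Nat.pow_le_pow_right (by norm_num) (by omega)
    have hdisj : Disjoint (Finset.Ico ((2:ℕ)^i) (2^(i+M))) (Finset.Ico ((2:ℕ)^(i+M)) (2^(i+M+1))) := by
      apply Finset.Ico_disjoint_Ico_consecutive
    rw [show i + (M+1) = (i+M)+1 by omega, hsplit, Finset.sum_union hdisj, ih, dyadic_sum]
    have : (2:ℝ)^(i+M) * (1/2)^(i+M+1) = 1/2 := by
      rw [pow_succ, ← mul_assoc, ← mul_pow]; norm_num
    rw [this]
    push_cast
    ring

lemma phi2_A4_eq_top : phi2 A4 = ⊤ := by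
  by_contra hne
  obtain ⟨R, hR⟩ := ENNReal.exists_nat_gt hne
  set M := 2*R + 2 with hM
  set i := M + 2 with hi
  have hiM : i + M ≤ 2^i := by
    have h1 : M < 2^M := Nat.lt_two_pow_self (n := M)
    have h2 : (2:ℕ)^i = 4 * 2^M := by rw [hi, pow_add]; ring
    omega
  have hq1 : 1 ≤ 2^(i+M) - 2^i := by
    have : (2:ℕ)^i < 2^(i+M) := Nat.pow_lt_pow_right (by norm_num) (by omega)
    omega
  have key := sum_chunks_le_phi2 (n := 2^i) (q := 2^(i+M) - 2^i) A4 e4_le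
    (by have := Nat.lt_two_pow_self (n := i); have : (2:ℕ)^i ≥ 2^2 := Nat.pow_le_pow_right (by norm_num) (by omega); omega)
    hq1
    (by
      calc 2^(i+M) - 2^i ≤ 2^(i+M) := Nat.sub_le _ _
        _ ≤ 2^(2^i) := Nat.pow_le_pow_right (by norm_num) hiM)
    (by
      intro j hj k hk
      rw [Finset.mem_Ico] at hj
      refine chunk_subset_AA e4_le ?_ hk
      have : (2:ℕ)^2 ≤ 2^i := Nat.pow_le_pow_right (by norm_num) (by omega)
      omega)
  rw [show 2^i + (2^(i+M) - 2^i) = 2^(i+M) by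
      have : (2:ℕ)^i ≤ 2^(i+M) := Nat.pow_le_pow_right (by norm_num) (by omega); omega,
    window_sum] at key
  have hcontr : (R : ℝ≥0∞) < phi2 A4 := by
    calc (R:ℝ≥0∞) < R + 1 := by
          refine ENNReal.lt_add_right ?_ one_ne_zero
          exact ENNReal.natCast_ne_top R
      _ ≤ M * ENNReal.ofReal (1/2) := by
          have : ENNReal.ofReal (1/2) = 1/2 := by
            rw [ENNReal.ofReal_div_of_pos (by norm_num)]
            norm_num
          rw [this, hM]
          push_cast
          have h2 : (2:ℝ≥0∞) * (1/2) = 1 := by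
            rw [one_div, ENNReal.mul_inv_cancel] <;> norm_num
          calc (R:ℝ≥0∞) + 1 = (↑R+1) * 1 := by ring
            _ = (↑R+1) * (2 * (1/2)) := by rw [h2]
            _ = (2*↑R+2) * (1/2) := by ring
            _ ≤ (2*↑R+2) * (1/2) := le_refl _
      _ ≤ phi2 A4 := key
  exact absurd hR (not_lt.2 hcontr.le)

end A4
section A4density
open Finset

lemma log2_ge_one {n : ℕ} (h : 2 ≤ n) : 1 ≤ Nat.log 2 n := by
  calc 1 = Nat.log 2 2 := (Nat.log_eq_of_pow_le_of_lt_pow (by norm_num) (by norm_num)).symm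
    _ ≤ Nat.log 2 n := Nat.log_mono_right h

lemma e4_succ {J : ℕ} (hJ : 1 ≤ J) :
    e4 (J+1) = e4 J + 1 ∨ (e4 (J+1) = e4 J ∧ J+1 = 2^(Nat.log 2 (J+1))) := by
  have haJ : Nat.log 2 J < J := Nat.log_lt_self 2 (by omega)
  have hab : Nat.log 2 J ≤ Nat.log 2 (J+1) := Nat.log_mono_right (by omega)
  have h1 : J < 2^(Nat.log 2 J + 1) := Nat.lt_pow_succ_log_self (by norm_num) J
  have h2pow : (2:ℕ)^(Nat.log 2 J + 2) = 2 * 2^(Nat.log 2 J + 1) := by ring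
  have h3 : 0 < (2:ℕ)^(Nat.log 2 J + 1) := pow_pos (by norm_num) _
  have hba : Nat.log 2 (J+1) ≤ Nat.log 2 J + 1 := by
    have hlt : J + 1 < 2^(Nat.log 2 J + 2) := by omega
    have := Nat.log_lt_of_lt_pow (by omega : J + 1 ≠ 0) hlt
    omega
  rcases Nat.eq_or_lt_of_le hab with heq | hlt
  · left
    simp only [e4, ← heq]
    omega
  · right
    have hbeq : Nat.log 2 (J+1) = Nat.log 2 J + 1 := by omega
    have h4 : 2^(Nat.log 2 (J+1)) ≤ J + 1 := Nat.pow_log_le_self 2 (by omega)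
    have h5 : J + 1 = 2^(Nat.log 2 (J+1)) := by rw [hbeq] at h4 ⊢; omega
    refine ⟨?_, h5⟩
    simp only [e4, hbeq]
    omega

lemma no_consec_pow {J : ℕ} (hJ : 1 ≤ J) (h1 : J+1 = 2^(Nat.log 2 (J+1)))
    (h2 : J+2 = 2^(Nat.log 2 (J+2))) : False := by
  have ha : 1 ≤ Nat.log 2 (J+1) := log2_ge_one (by omega)
  have hb : 1 ≤ Nat.log 2 (J+2) := log2_ge_one (by omega)
  have d1 : 2 ∣ J + 1 := h1 ▸ dvd_pow_self 2 (by omega)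
  have d2 : 2 ∣ J + 2 := h2 ▸ dvd_pow_self 2 (by omega)
  omega

lemma e4_one : e4 1 = 0 := by simp [e4]

lemma sum_inv : ∀ J, 1 ≤ J →
    (∑ j ∈ Finset.Icc 1 J, 2^(e4 j) ≤ 5 * 2^(e4 J) ∧
      (J+1 = 2^(Nat.log 2 (J+1)) → ∑ j ∈ Finset.Icc 1 J, 2^(e4 j) ≤ 4 * 2^(e4 J))) := by
  intro J hJ
  induction J, hJ using Nat.le_induction with
  | base => simp [e4_one]
  | succ J hJ ih =>
    have hsum : ∑ j ∈ Finset.Icc 1 (J+1), 2^(e4 j)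
        = (∑ j ∈ Finset.Icc 1 J, 2^(e4 j)) + 2^(e4 (J+1)) :=
      Finset.sum_Icc_succ_top (by omega) _
    rcases e4_succ hJ with h | ⟨h, hpow⟩
    · have h2 : (2:ℕ)^(e4 (J+1)) = 2 * 2^(e4 J) := by rw [h]; ring
      constructor
      · rw [hsum, h2]
        have := ih.1
        have h3 : (2:ℕ)^(e4 J + 1) = 2 * 2^(e4 J) := by ring
        omega
      · intro _
        rw [hsum, h2]
        have := ih.1
        have h3 : (2:ℕ)^(e4 J + 1) = 2 * 2^(e4 J) := by ring
        omega
    · constructor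
      · rw [hsum, h]
        have := ih.2 hpow
        omega
      · intro hpow2
        exact absurd hpow2 (fun hp => no_consec_pow hJ hpow (by convert hp using 3 <;> omega))

lemma A4_count {x : ℕ} (hx : 4 ≤ x) :
    ((A4 ∩ Set.Icc 1 x).ncard : ℝ) ≤ 5 * 2^(e4 (Nat.log 2 x)) := by
  set J := Nat.log 2 x with hJdef
  have hJ2 : 2 ≤ J := by
    calc 2 = Nat.log 2 4 := (Nat.log_eq_of_pow_le_of_lt_pow (by norm_num) (by norm_num)).symm
      _ ≤ Nat.log 2 x := Nat.log_mono_right hx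
  have hsub : A4 ∩ Set.Icc 1 x ⊆ ↑((Finset.Icc 1 J).biUnion (chunk e4)) := by
    rintro k ⟨hkA, hk1, hkx⟩
    obtain ⟨hc, hl⟩ := mem_chunk_of_mem_AA (e := e4) hkA
    simp only [Finset.coe_biUnion, Set.mem_iUnion, Finset.mem_coe, Finset.mem_Icc]
    exact ⟨Nat.log 2 k, ⟨by omega, Nat.log_mono_right hkx⟩, hc⟩
  have hcount : (A4 ∩ Set.Icc 1 x).ncard ≤ ∑ j ∈ Finset.Icc 1 J, 2^(e4 j) := by
    calc (A4 ∩ Set.Icc 1 x).ncard ≤ ((↑((Finset.Icc 1 J).biUnion (chunk e4)) : Set ℕ)).ncard :=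
          Set.ncard_le_ncard hsub (Set.toFinite _)
      _ = ((Finset.Icc 1 J).biUnion (chunk e4)).card := Set.ncard_coe_finset _
      _ ≤ ∑ j ∈ Finset.Icc 1 J, (chunk e4 j).card := Finset.card_biUnion_le
      _ = ∑ j ∈ Finset.Icc 1 J, 2^(e4 j) := by
          refine Finset.sum_congr rfl fun j _ => card_chunk
  have h5 := (sum_inv J (by omega)).1
  calc ((A4 ∩ Set.Icc 1 x).ncard : ℝ) ≤ ((5 * 2^(e4 J) : ℕ) : ℝ) := by
        exact_mod_cast le_trans hcount h5
    _ = 5 * 2^(e4 J) := by push_cast; ring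

lemma A4_density :
    Filter.Tendsto (fun n : ℕ => ((A4 ∩ Set.Icc 1 n).ncard : ℝ) / n) Filter.atTop (nhds 0) := by
  rw [NormedAddCommGroup.tendsto_nhds_zero]
  intro ε hε
  obtain ⟨Q, hQ⟩ := exists_nat_gt (5/ε)
  filter_upwards [Filter.eventually_ge_atTop (2^(Q+2))] with x hx
  have hx4 : 4 ≤ x := le_trans (by calc (4:ℕ) = 2^2 := by norm_num
    _ ≤ 2^(Q+2) := Nat.pow_le_pow_right (by norm_num) (by omega)) hx
  set J := Nat.log 2 x with hJdef
  have hJQ : Q + 2 ≤ J := by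
    calc Q + 2 = Nat.log 2 (2^(Q+2)) := (Nat.log_pow (by norm_num) _).symm
      _ ≤ Nat.log 2 x := Nat.log_mono_right hx
  have hJ1 : 1 ≤ J := by omega
  have hxpos : (0:ℝ) < x := by positivity
  have hcount := A4_count hx4
  have h2J : (2:ℝ)^J ≤ x := by
    exact_mod_cast Nat.pow_log_le_self 2 (by omega : x ≠ 0)
  have hs : Nat.log 2 J + 1 ≤ J := Nat.log_lt_self 2 (by omega)
  have hkey : (2:ℝ)^(e4 J) * (1/2)^J = (1/2)^(Nat.log 2 J + 1) := by
    rw [show e4 J = J - (Nat.log 2 J + 1) from rfl]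
    exact real_pow_helper hs
  have hJlt : (J:ℝ) < 2^(Nat.log 2 J + 1) := by
    exact_mod_cast Nat.lt_pow_succ_log_self (by norm_num) J
  have hnn : (0:ℝ) ≤ ((A4 ∩ Set.Icc 1 x).ncard : ℝ) / x := by positivity
  rw [Real.norm_eq_abs, abs_of_nonneg hnn]
  calc ((A4 ∩ Set.Icc 1 x).ncard : ℝ) / x ≤ (5 * 2^(e4 J)) / 2^J := by
        apply div_le_div₀ (by positivity) hcount (by positivity) h2J
    _ = 5 * ((2:ℝ)^(e4 J) * (1/2)^J) := by
        rw [div_eq_mul_inv, mul_assoc]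
        congr 1
        rw [← inv_pow]
        norm_num
    _ = 5 * (1/2)^(Nat.log 2 J + 1) := by rw [hkey]
    _ = 5 / 2^(Nat.log 2 J + 1) := by
        rw [one_div, inv_pow, ← div_eq_mul_inv]
    _ ≤ 5 / J := by
        apply div_le_div_of_nonneg_left (by norm_num) (by exact_mod_cast Nat.lt_of_lt_of_le (by omega) hJ1) hJlt.le
    _ < ε := by
        rw [div_lt_iff₀ (by exact_mod_cast Nat.lt_of_lt_of_le (by omega) hJ1)]
        have h1 : 5/ε < (J:ℝ) := by
          calc 5/ε < Q := hQ
            _ ≤ J := by exact_mod_cast (by omega : Q ≤ J)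
        calc (5:ℝ) = (5/ε) * ε := by field_simp
          _ < J * ε := by
              apply mul_lt_mul_of_pos_right h1 hε
          _ = ε * J := by ring

end A4density
section A2
open Finset

def tt : ℕ → ℕ
  | 0 => 2
  | (i+1) => tt i + 2^(tt i)

lemma tt_succ (i : ℕ) : tt (i+1) = tt i + 2^(tt i) := rfl

lemma tt_ge (i : ℕ) : i + 2 ≤ tt i := by
  induction i with
  | zero => simp [tt]
  | succ i ih =>
    have h : 0 < 2^(tt i) := pow_pos (by norm_num) _
    have h2 : tt i < 2^(tt i) := Nat.lt_two_pow_self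
    rw [tt_succ]; omega

lemma tt_mono : StrictMono tt := by
  apply strictMono_nat_of_lt_succ
  intro i
  have h : 0 < 2^(tt i) := pow_pos (by norm_num) _
  rw [tt_succ]; omega

def lev (j : ℕ) : ℕ := Nat.findGreatest (fun i => tt i ≤ j) j

lemma tt_lev_le {j : ℕ} (hj : 2 ≤ j) : tt (lev j) ≤ j :=
  Nat.findGreatest_spec (P := fun i => tt i ≤ j) (m := 0) (n := j) (Nat.zero_le _)
    (by simpa [tt] using hj)

lemma lt_tt_lev_succ (j : ℕ) : j < tt (lev j + 1) := by
  by_contra h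
  push_neg at h
  have h1 : lev j + 1 ≤ j := by have := tt_ge (lev j + 1); omega
  have : lev j + 1 ≤ lev j :=
    Nat.le_findGreatest (P := fun i => tt i ≤ j) (n := j) h1 h
  omega

lemma lev_eq {i j : ℕ} (h1 : tt i ≤ j) (h2 : j < tt (i+1)) : lev j = i := by
  have hij : i ≤ j := by have := tt_ge i; omega
  have hle : i ≤ lev j := Nat.le_findGreatest (P := fun i => tt i ≤ j) (n := j) hij h1
  have hlt : lev j < i + 1 := by
    by_contra h
    push_neg at h
    have h2j : 2 ≤ j := by have := tt_ge i; omega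
    have hs := tt_lev_le h2j
    have hmono : tt (i+1) ≤ tt (lev j) := tt_mono.monotone h
    omega
  omega

lemma lev_ge {i j : ℕ} (h : tt i ≤ j) : i ≤ lev j := by
  have hij : i ≤ j := by have := tt_ge i; omega
  exact Nat.le_findGreatest (P := fun i => tt i ≤ j) (n := j) hij h

def e2 : ℕ → ℕ := fun j => j - tt (lev j)

lemma e2_le : ∀ j, e2 j ≤ j := fun j => Nat.sub_le _ _

noncomputable def A2 : Set ℕ := AA e2

lemma e2_eq {i j : ℕ} (h1 : tt i ≤ j) (h2 : j < tt (i+1)) : e2 j = j - tt i := by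
  rw [e2, lev_eq h1 h2]

lemma level_sum (i : ℕ) :
    ∑ j ∈ Finset.Ico (tt i) (tt (i+1)), ENNReal.ofReal ((2:ℝ)^(e2 j) * (1/2)^j) = 1 := by
  have hterm : ∀ j ∈ Finset.Ico (tt i) (tt (i+1)),
      ENNReal.ofReal ((2:ℝ)^(e2 j) * (1/2)^j) = ENNReal.ofReal ((1/2:ℝ)^(tt i)) := by
    intro j hj
    rw [Finset.mem_Ico] at hj
    rw [e2_eq hj.1 hj.2, real_pow_helper hj.1]
  rw [Finset.sum_congr rfl hterm, Finset.sum_const, Nat.card_Ico, nsmul_eq_mul,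
    ← ENNReal.ofReal_natCast, ← ENNReal.ofReal_mul (by positivity)]
  rw [show tt (i+1) - tt i = 2^(tt i) by rw [tt_succ]; exact Nat.add_sub_cancel_left _ _]
  rw [show ((((2:ℕ)^(tt i) : ℕ)) : ℝ) = ((2:ℝ))^(tt i) by push_cast; ring]
  rw [show ((2:ℝ))^(tt i) * (1/2:ℝ)^(tt i) = 1 by rw [← mul_pow]; norm_num]
  exact ENNReal.ofReal_one

lemma phi2_A2_tail (m : ℕ) : 1 ≤ phi2 (A2 \ Set.Iio m) := by
  have h2tm : 2 ≤ tt m := by have := tt_ge m; omega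
  have key := sum_chunks_le_phi2 (n := tt m) (q := 2^(tt m)) (A2 \ Set.Iio m) e2_le h2tm
    (pow_pos (by norm_num : (0:ℕ) < 2) (tt m)) (le_refl _)
    (by
      intro j hj k hk
      rw [Finset.mem_Ico] at hj
      have hj2 : 2 ≤ j := by omega
      refine ⟨chunk_subset_AA e2_le hj2 hk, ?_⟩
      simp only [chunk, Finset.mem_Ico] at hk
      have hjlt : j < 2^j := Nat.lt_two_pow_self
      have : tt m ≤ j := hj.1
      have := tt_ge m
      simp only [Set.mem_Iio, not_lt]
      omega)
  rwa [show tt m + 2^(tt m) = tt (m+1) from (tt_succ m).symm, level_sum m] at key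

end A2
section A2upper
open Finset

lemma add_four_le {s : ℕ} (h : 3 ≤ s) : s + 4 ≤ 2^s := by
  induction s, h using Nat.le_induction with
  | base => norm_num
  | succ s hs ih =>
    have h2 : (2:ℕ)^(s+1) = 2 * 2^s := by ring
    omega

lemma sum_half_pow_le (a b : ℕ) :
    ∑ j ∈ Finset.Ico a b, ENNReal.ofReal ((1/2:ℝ)^j) ≤ ENNReal.ofReal ((1/2:ℝ)^a * 2) := by
  rw [← ENNReal.ofReal_sum_of_nonneg (fun j _ => by positivity)]
  apply ENNReal.ofReal_le_ofReal
  rw [Finset.sum_Ico_eq_sum_range]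
  calc ∑ i ∈ Finset.range (b - a), (1/2:ℝ)^(a+i)
      = (1/2:ℝ)^a * ∑ i ∈ Finset.range (b-a), (1/2:ℝ)^i := by
        rw [Finset.mul_sum]
        exact Finset.sum_congr rfl fun i _ => by rw [pow_add]
    _ ≤ (1/2:ℝ)^a * 2 := by
        have := sum_geometric_two_le (b - a)
        have h0 : (0:ℝ) ≤ (1/2:ℝ)^a := by positivity
        nlinarith

lemma chunk_glam_sum (j : ℕ) :
    ∑ k ∈ chunk e2 j, glam k = ENNReal.ofReal ((2:ℝ)^(e2 j) * (1/2)^j) := by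
  have h := chunk_sum (e := e2) (j := j) Set.univ (e2_le j) (fun _ _ => Set.mem_univ _)
  simpa [Set.indicator_univ] using h

lemma sum_indicator_eq_filter (s : Finset ℕ) (B : Set ℕ) [DecidablePred (· ∈ B)] :
    ∑ k ∈ s, B.indicator glam k = ∑ k ∈ s.filter (fun k => k ∈ B), glam k := by
  rw [Finset.sum_filter]
  refine Finset.sum_congr rfl fun k _ => ?_
  by_cases h : k ∈ B <;> simp [Set.indicator, h]

lemma fiber_le_chunk (s : Finset ℕ) (j : ℕ) (hs : ∀ k ∈ s, Nat.log 2 k = j) :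
    ∑ k ∈ s, A2.indicator glam k ≤ ENNReal.ofReal ((2:ℝ)^(e2 j) * (1/2)^j) := by
  classical
  rw [sum_indicator_eq_filter, ← chunk_glam_sum j]
  apply Finset.sum_le_sum_of_subset
  intro k hk
  rw [Finset.mem_filter] at hk
  have h := (mem_chunk_of_mem_AA hk.2).1
  rwa [hs k hk.1] at h

lemma fiber_le_card (s : Finset ℕ) (j c : ℕ) (hs : ∀ k ∈ s, Nat.log 2 k = j)
    (hc : s.card ≤ c) :
    ∑ k ∈ s, A2.indicator glam k ≤ (c:ℝ≥0∞) * ENNReal.ofReal ((1/2:ℝ)^j) := by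
  calc ∑ k ∈ s, A2.indicator glam k ≤ ∑ _k ∈ s, ENNReal.ofReal ((1/2:ℝ)^j) := by
        refine Finset.sum_le_sum fun k hk => ?_
        calc A2.indicator glam k ≤ glam k := Set.indicator_le_self _ _ k
          _ = ENNReal.ofReal ((1/2:ℝ)^j) := by rw [glam_eq, hs k hk]
    _ = s.card • ENNReal.ofReal ((1/2:ℝ)^j) := Finset.sum_const _
    _ ≤ c • ENNReal.ofReal ((1/2:ℝ)^j) := by
        rw [nsmul_eq_mul, nsmul_eq_mul]
        exact mul_le_mul_left (Nat.cast_le.2 hc) _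
    _ = (c:ℝ≥0∞) * ENNReal.ofReal ((1/2:ℝ)^j) := nsmul_eq_mul _ _

lemma piece_high (E : Finset ℕ) (hE1 : ∀ k ∈ E, E.card ≤ k) (hne : E.Nonempty) (T : ℕ)
    (hT : ∀ j, T ≤ j → ((2:ℝ)^(e2 j) * (1/2)^j) ≤ (1/2:ℝ)^T) :
    ∑ k ∈ E.filter (fun k => T ≤ Nat.log 2 k), A2.indicator glam k
      ≤ ENNReal.ofReal ((T + 4) * (1/2)^T) := by
  classical
  set u := E.min' hne with hu
  set n := Nat.log 2 u with hn
  set s := max T n with hs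
  set M := max (Nat.log 2 (E.max' hne) + 1) (s + T) with hM
  set Ef := E.filter (fun k => T ≤ Nat.log 2 k) with hEf
  have hcard : E.card ≤ 2^(n+1) :=
    le_trans (hE1 u (E.min'_mem hne)) (Nat.lt_pow_succ_log_self (by norm_num) u).le
  have hmaps : ∀ k ∈ Ef, Nat.log 2 k ∈ Finset.Ico T M := by
    intro k hk
    rw [hEf, Finset.mem_filter] at hk
    rw [Finset.mem_Ico]
    refine ⟨hk.2, ?_⟩
    have h1 : Nat.log 2 k ≤ Nat.log 2 (E.max' hne) := Nat.log_mono_right (Finset.le_max' E k hk.1)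
    omega
  rw [← Finset.sum_fiberwise_of_maps_to hmaps (A2.indicator glam)]
  have hTs : T ≤ s := le_max_left _ _
  have hsM : s + T ≤ M := le_max_right _ _
  rw [show Finset.Ico T M = Finset.Ico T s ∪ Finset.Ico s M from
      (Finset.Ico_union_Ico_eq_Ico hTs (by omega)).symm,
    Finset.sum_union (Finset.Ico_disjoint_Ico_consecutive _ _ _),
    show Finset.Ico s M = Finset.Ico s (s+T) ∪ Finset.Ico (s+T) M from
      (Finset.Ico_union_Ico_eq_Ico (by omega) hsM).symm,
    Finset.sum_union (Finset.Ico_disjoint_Ico_consecutive _ _ _)]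
  have hEfsub : ∀ j, ∀ k ∈ Ef.filter (fun k => Nat.log 2 k = j), Nat.log 2 k = j :=
    fun j k hk => (Finset.mem_filter.1 hk).2
  have hzero : ∑ j ∈ Finset.Ico T s,
      ∑ k ∈ Ef.filter (fun k => Nat.log 2 k = j), A2.indicator glam k = 0 := by
    apply Finset.sum_eq_zero
    intro j hj
    rw [Finset.mem_Ico] at hj
    apply Finset.sum_eq_zero
    intro k hk
    exfalso
    rw [Finset.mem_filter, hEf, Finset.mem_filter] at hk
    have hun : n ≤ Nat.log 2 k := Nat.log_mono_right (E.min'_le k hk.1.1)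
    omega
  have hmid : ∑ j ∈ Finset.Ico s (s+T),
      ∑ k ∈ Ef.filter (fun k => Nat.log 2 k = j), A2.indicator glam k
      ≤ (T : ℝ≥0∞) * ENNReal.ofReal ((1/2:ℝ)^T) := by
    have step : ∀ j ∈ Finset.Ico s (s+T),
        ∑ k ∈ Ef.filter (fun k => Nat.log 2 k = j), A2.indicator glam k
          ≤ ENNReal.ofReal ((1/2:ℝ)^T) := by
      intro j hj
      rw [Finset.mem_Ico] at hj
      refine le_trans (fiber_le_chunk _ j (hEfsub j)) ?_
      exact ENNReal.ofReal_le_ofReal (hT j (by omega))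
    refine le_trans (Finset.sum_le_sum step) ?_
    rw [Finset.sum_const, Nat.card_Ico, Nat.add_sub_cancel_left, nsmul_eq_mul]
  have htail : ∑ j ∈ Finset.Ico (s+T) M,
      ∑ k ∈ Ef.filter (fun k => Nat.log 2 k = j), A2.indicator glam k
      ≤ ENNReal.ofReal (4 * (1/2:ℝ)^T) := by
    have step : ∀ j ∈ Finset.Ico (s+T) M,
        ∑ k ∈ Ef.filter (fun k => Nat.log 2 k = j), A2.indicator glam k
          ≤ ((2^(n+1) : ℕ) : ℝ≥0∞) * ENNReal.ofReal ((1/2:ℝ)^j) := by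
      intro j _
      refine fiber_le_card _ j _ (hEfsub j) ?_
      refine le_trans (Finset.card_le_card ?_) hcard
      exact le_trans (Finset.filter_subset _ _) (by rw [hEf]; exact Finset.filter_subset _ _)
    refine le_trans (Finset.sum_le_sum step) ?_
    rw [← Finset.mul_sum]
    refine le_trans (mul_le_mul_right (sum_half_pow_le _ _) _) ?_
    rw [← ENNReal.ofReal_natCast, ← ENNReal.ofReal_mul (by positivity)]
    apply ENNReal.ofReal_le_ofReal
    have hsn : n ≤ s := le_max_right T n
    have hcast : (((2:ℕ)^(n+1) : ℕ) : ℝ) = (2:ℝ)^(n+1) := by push_cast; ring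
    rw [hcast]
    have heq : (2:ℝ)^(n+1) * ((1/2)^(s+T) * 2) = 4 * ((2:ℝ)^n * (1/2)^s) * (1/2)^T := by
      rw [pow_add, pow_succ]; ring
    rw [heq]
    have hle1 : (2:ℝ)^n * (1/2)^s ≤ 1 := by
      calc (2:ℝ)^n * (1/2)^s ≤ (2:ℝ)^n * (1/2)^n := by
            have h2 := pow_le_pow_of_le_one (by norm_num : (0:ℝ) ≤ 1/2) (by norm_num) hsn
            have h0 : (0:ℝ) ≤ (2:ℝ)^n := by positivity
            nlinarith
        _ = 1 := by rw [← mul_pow]; norm_num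
    nlinarith [pow_nonneg (by norm_num : (0:ℝ) ≤ 1/2) T]
  have hcomb : (T : ℝ≥0∞) * ENNReal.ofReal ((1/2:ℝ)^T) + ENNReal.ofReal (4 * (1/2:ℝ)^T)
      = ENNReal.ofReal ((T + 4) * (1/2)^T) := by
    rw [← ENNReal.ofReal_natCast T, ← ENNReal.ofReal_mul (by positivity),
      ← ENNReal.ofReal_add (by positivity) (by positivity)]
    congr 1
    ring
  rw [hzero, zero_add]
  exact le_trans (add_le_add hmid htail) (le_of_eq hcomb)

lemma tt_lev_le_max (j : ℕ) : tt (lev j) ≤ max 2 j := by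
  rcases le_or_gt 2 j with h | h
  · exact le_trans (tt_lev_le h) (le_max_right _ _)
  · have h0 : lev j = 0 := by
      interval_cases j
      · rfl
      · show Nat.findGreatest (fun i => tt i ≤ 1) 1 = 0
        rw [Nat.findGreatest_succ]
        norm_num [tt]
    rw [h0]
    exact le_max_left _ _

lemma pieces_pd {m : ℕ} {E : Fin (m+1) → Finset ℕ}
    (hinc : ∀ j k : Fin (m+1), j < k → ∀ a ∈ E j, ∀ b ∈ E k, a < b)
    (p : ℕ → Prop) [DecidablePred p] :
    (↑(Finset.univ : Finset (Fin (m+1))) : Set (Fin (m+1))).PairwiseDisjoint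
      (fun l => (E l).filter p) := by
  intro a _ b _ hab
  have key : ∀ x y : Fin (m+1), x < y → Disjoint ((E x).filter p) ((E y).filter p) := by
    intro x y hxy
    rw [Finset.disjoint_left]
    intro c hc hc'
    rw [Finset.mem_filter] at hc hc'
    exact absurd rfl (hinc x y hxy c hc.1 c hc'.1).ne
  rcases lt_or_gt_of_ne hab with h | h
  · exact key a b h
  · exact (key b a h).symm

lemma phi2_A2_le : phi2 A2 ≤ 3 := by
  classical
  apply phi2_le_of_forall
  intro F hF
  rcases hF with rfl | ⟨m, E, hS1, hinc, hfirst, rfl⟩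
  · simp
  · set v := (E 0).min' (hS1 0).2 with hv
    have hm1v : m + 1 ≤ v := hfirst v (Finset.min'_mem _ _)
    set G := Finset.univ.biUnion E with hG
    have hvF : ∀ k ∈ G, v ≤ k := by
      intro k hk
      rw [hG, Finset.mem_biUnion] at hk
      obtain ⟨l, -, hkl⟩ := hk
      rcases eq_or_ne l 0 with rfl | hl
      · exact Finset.min'_le _ _ hkl
      · exact (hinc 0 l (Fin.pos_of_ne_zero hl) v (Finset.min'_mem _ _) k hkl).le
    set n0 := Nat.log 2 v with hn0
    set i0 := lev n0 with hi0
    set T := tt (i0 + 2) with hTdef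
    have hlogk : ∀ k ∈ G, k ∈ A2 → tt i0 ≤ Nat.log 2 k := by
      intro k hk hkA
      have h2 : 2 ≤ Nat.log 2 k := (mem_chunk_of_mem_AA hkA).2
      have hn0k : n0 ≤ Nat.log 2 k := Nat.log_mono_right (hvF k hk)
      have hmax := tt_lev_le_max n0
      rw [← hi0] at hmax
      omega
    have hv2 : v < 2^(n0+1) := Nat.lt_pow_succ_log_self (by norm_num) v
    have hn0T : n0 < tt (i0+1) := lt_tt_lev_succ n0
    have hm2 : m + 1 ≤ 2^(tt (i0+1)) := by
      have h1 : m + 1 ≤ 2^(n0+1) := by omega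
      exact le_trans h1 (Nat.pow_le_pow_right (by norm_num) (by omega))
    rw [← Finset.sum_filter_add_sum_filter_not G (fun k => Nat.log 2 k < T)
      (A2.indicator glam)]
    set G1 := G.filter (fun k => Nat.log 2 k < T) with hG1
    set G2 := G.filter (fun k => ¬ Nat.log 2 k < T) with hG2
    have hpart1 : ∑ k ∈ G1, A2.indicator glam k ≤ 2 := by
      rw [sum_indicator_eq_filter]
      set D := (Finset.Ico (tt i0) T).biUnion (chunk e2) with hD
      have hsub : G1.filter (fun k => k ∈ A2) ⊆ D := by
        intro k hk
        rw [Finset.mem_filter, hG1, Finset.mem_filter] at hk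
        rw [hD, Finset.mem_biUnion]
        refine ⟨Nat.log 2 k, ?_, (mem_chunk_of_mem_AA hk.2).1⟩
        rw [Finset.mem_Ico]
        exact ⟨hlogk k hk.1.1 hk.2, hk.1.2⟩
      refine le_trans (Finset.sum_le_sum_of_subset hsub) ?_
      have hDsum : ∑ k ∈ D, glam k = ∑ j ∈ Finset.Ico (tt i0) T, ∑ k ∈ chunk e2 j, glam k := by
        refine Finset.sum_biUnion ?_
        intro a _ b _ hab
        rcases lt_or_gt_of_ne hab with h | h
        · exact Finset.disjoint_left.2 fun x hx hx' =>
            absurd rfl (disjoint_chunks e2_le h x hx x hx').ne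
        · exact Finset.disjoint_left.2 fun x hx hx' =>
            absurd rfl (disjoint_chunks e2_le h x hx' x hx).ne
      rw [hDsum, Finset.sum_congr rfl (fun j _ => chunk_glam_sum j)]
      rw [show Finset.Ico (tt i0) T = Finset.Ico (tt i0) (tt (i0+1)) ∪
          Finset.Ico (tt (i0+1)) (tt (i0+2)) from
          (Finset.Ico_union_Ico_eq_Ico (tt_mono.monotone (by omega))
            (tt_mono.monotone (by omega))).symm,
        Finset.sum_union (Finset.Ico_disjoint_Ico_consecutive _ _ _),
        level_sum i0, level_sum (i0+1)]
      norm_num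
    have hTj : ∀ j, T ≤ j → ((2:ℝ)^(e2 j) * (1/2)^j) ≤ (1/2:ℝ)^T := by
      intro j hj
      have h2j : 2 ≤ j := by have := tt_ge (i0+2); omega
      have hlev : i0 + 2 ≤ lev j := lev_ge (by rw [← hTdef]; exact hj)
      have htlev : T ≤ tt (lev j) := by rw [hTdef]; exact tt_mono.monotone hlev
      have httj : tt (lev j) ≤ j := tt_lev_le h2j
      rw [show e2 j = j - tt (lev j) from rfl, real_pow_helper httj]
      exact pow_le_pow_of_le_one (by norm_num) (by norm_num) htlev
    have hpart2 : ∑ k ∈ G2, A2.indicator glam k ≤ 1 := by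
      rw [hG2, hG, Finset.filter_biUnion, Finset.sum_biUnion (pieces_pd hinc _)]
      have hbound : ∀ l : Fin (m+1), ∑ k ∈ (E l).filter (fun k => ¬ Nat.log 2 k < T),
          A2.indicator glam k ≤ ENNReal.ofReal ((T + 4) * (1/2)^T) := by
        intro l
        have heq : (E l).filter (fun k => ¬ Nat.log 2 k < T)
            = (E l).filter (fun k => T ≤ Nat.log 2 k) := by
          refine Finset.filter_congr fun k _ => ?_
          simp [not_lt]
        rw [heq]
        exact piece_high (E l) (hS1 l).1.2 (hS1 l).2 T hTj
      refine le_trans (Finset.sum_le_sum (fun l _ => hbound l)) ?_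
      rw [Finset.sum_const, Finset.card_univ, Fintype.card_fin, nsmul_eq_mul]
      refine le_trans (mul_le_mul_left ((Nat.cast_le (α := ℝ≥0∞)).2 hm2) _) ?_
      rw [← ENNReal.ofReal_natCast, ← ENNReal.ofReal_mul (by positivity)]
      rw [← ENNReal.ofReal_one]
      apply ENNReal.ofReal_le_ofReal
      set t' := tt (i0+1) with ht'
      have ht3 : 3 ≤ t' := by have := tt_ge (i0+1); omega
      have hT2 : T = t' + 2^t' := tt_succ (i0+1)
      have hkey : T + 4 ≤ 2^(2^t') := by
        have h1 : t' + 4 ≤ 2^t' := add_four_le ht3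
        have h3 : (2:ℕ)^(t'+1) = 2 * 2^t' := by ring
        have h4 : t' + 1 ≤ 2^t' := by have := Nat.lt_two_pow_self (n := t'); omega
        have h5 : (2:ℕ)^(t'+1) ≤ 2^(2^t') := Nat.pow_le_pow_right (by norm_num) h4
        omega
      push_cast
      have hTsplit : (1/2:ℝ)^T = (1/2)^t' * (1/2)^(2^t') := by rw [hT2, pow_add]
      have hc2R : (T:ℝ) + 4 ≤ (2:ℝ)^(2^t') := by exact_mod_cast hkey
      have h1 : (2:ℝ)^t' * (1/2:ℝ)^t' = 1 := by rw [← mul_pow]; norm_num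
      have hpos : (0:ℝ) < (1/2:ℝ)^(2^t') := by positivity
      rw [hTsplit]
      calc (2:ℝ)^t' * (((T:ℝ)+4) * ((1/2:ℝ)^t' * (1/2)^(2^t')))
          = ((2:ℝ)^t' * (1/2)^t') * (((T:ℝ)+4) * (1/2)^(2^t')) := by ring
        _ = ((T:ℝ)+4) * (1/2)^(2^t') := by rw [h1, one_mul]
        _ ≤ (2:ℝ)^(2^t') * (1/2)^(2^t') := mul_le_mul_of_nonneg_right hc2R hpos.le
        _ = 1 := by rw [← mul_pow]; norm_num
    refine le_trans (add_le_add hpart1 hpart2) ?_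
    norm_num

end A2upper
section Inclusions
open Finset

lemma glam_le_one (k : ℕ) : glam k ≤ 1 := by
  rw [glam_eq, ← ENNReal.ofReal_one]
  apply ENNReal.ofReal_le_ofReal
  apply pow_le_one₀ <;> norm_num

lemma exh_subset_fin (A : Set ℕ)
    (h : Filter.Tendsto (fun m : ℕ => phi2 (A \ Set.Iio m)) Filter.atTop (nhds 0)) :
    phi2 A < ⊤ := by
  classical
  have hev : ∀ᶠ m : ℕ in Filter.atTop, phi2 (A \ Set.Iio m) < 1 :=
    h.eventually_lt_const (by norm_num)
  obtain ⟨m, hm⟩ := hev.exists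
  have hle : phi2 A ≤ (m : ℝ≥0∞) + 1 := by
    apply phi2_le_of_forall
    intro F hF
    have hsplit : ∀ k, A.indicator glam k ≤
        (A ∩ Set.Iio m).indicator glam k + (A \ Set.Iio m).indicator glam k := by
      intro k
      by_cases h1 : k ∈ A <;> by_cases h2 : k < m <;>
        simp [Set.indicator_apply, h1, h2, Set.mem_inter_iff, Set.mem_diff, Set.mem_Iio]
    refine le_trans (Finset.sum_le_sum (fun k _ => hsplit k)) ?_
    rw [Finset.sum_add_distrib]
    apply add_le_add
    · rw [sum_indicator_eq_filter]
      have hsub2 : F.filter (fun k => k ∈ A ∩ Set.Iio m) ⊆ Finset.range m := by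
        intro k hk
        rw [Finset.mem_filter] at hk
        rw [Finset.mem_range]
        exact hk.2.2
      refine le_trans (Finset.sum_le_sum_of_subset hsub2) ?_
      calc ∑ k ∈ Finset.range m, glam k ≤ ∑ _k ∈ Finset.range m, 1 :=
            Finset.sum_le_sum (fun k _ => glam_le_one k)
        _ = m := by simp
    · exact le_trans (sum_le_phi2 _ hF) hm.le
  refine lt_of_le_of_lt hle ?_
  exact ENNReal.add_lt_top.2 ⟨ENNReal.natCast_lt_top m, ENNReal.one_lt_top⟩

lemma lam_lower {k n : ℕ} (hk : 1 ≤ k) (hkn : k ≤ n) :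
    ENNReal.ofReal (1/(n:ℝ)) ≤ glam k := by
  rw [glam_eq]
  apply ENNReal.ofReal_le_ofReal
  have h1 : (2:ℕ)^(Nat.log 2 k) ≤ k := Nat.pow_log_le_self 2 (by omega)
  have h2 : ((2:ℝ))^(Nat.log 2 k) ≤ (n:ℝ) := by exact_mod_cast le_trans h1 hkn
  have h3 : (0:ℝ) < (2:ℝ)^(Nat.log 2 k) := by positivity
  rw [show (1/2:ℝ)^(Nat.log 2 k) = 1/(2:ℝ)^(Nat.log 2 k) by rw [one_div, inv_pow, one_div]]
  exact one_div_le_one_div_of_le h3 h2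

lemma exists_piece (A : Set ℕ) (ε : ℝ) (hε : 0 < ε)
    (H : ∀ N : ℕ, ∃ n : ℕ, N ≤ n ∧ 1 ≤ n ∧ ε * n ≤ ((A ∩ Set.Icc 1 n).ncard : ℝ))
    (N : ℕ) :
    ∃ Ef : Finset ℕ, (∀ k ∈ Ef, k ∈ A) ∧ (∀ k ∈ Ef, N ≤ k) ∧ (∀ k ∈ Ef, Ef.card ≤ k) ∧
      Ef.Nonempty ∧ ENNReal.ofReal (ε/4) ≤ ∑ k ∈ Ef, A.indicator glam k := by
  classical
  obtain ⟨n, hnN, hn1, hc⟩ := H (max 1 (Nat.ceil ((2*(N:ℝ) + 8)/ε)))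
  have hnpos : (0:ℝ) < n := by exact_mod_cast hn1
  set Tf := (Finset.Icc 1 n).filter (fun k => k ∈ A) with hTf
  have hTcard : Tf.card = (A ∩ Set.Icc 1 n).ncard := by
    rw [← Set.ncard_coe_finset]
    congr 1
    ext k
    simp only [hTf, Finset.coe_filter, Finset.mem_Icc, Set.mem_setOf_eq,
      Set.mem_inter_iff, Set.mem_Icc]
    tauto
  obtain ⟨c, hcdef⟩ : ∃ c, Tf.card = c := ⟨_, rfl⟩
  rw [hcdef] at hTcard
  have hcR : ε * n ≤ (c:ℝ) := by rw [hTcard]; exact hc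
  have hn8 : (2*(N:ℝ) + 8) ≤ ε * n := by
    have h1 : (2*(N:ℝ) + 8)/ε ≤ ((Nat.ceil ((2*(N:ℝ) + 8)/ε) : ℕ) : ℝ) := Nat.le_ceil _
    have h2 : ((Nat.ceil ((2*(N:ℝ) + 8)/ε) : ℕ) : ℝ) ≤ (n:ℝ) := by
      exact_mod_cast le_trans (le_max_right 1 _) hnN
    have h3 : (2*(N:ℝ) + 8)/ε ≤ (n:ℝ) := le_trans h1 h2
    rw [div_le_iff₀ hε] at h3
    linarith
  have hc8 : 2*N + 8 ≤ c := by
    have : ((2*N + 8 : ℕ) : ℝ) ≤ (c:ℝ) := by push_cast; linarith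
    exact_mod_cast this
  set L := c/2 with hLdef
  set r := c/4 + 1 with hrdef
  have hNL : N ≤ L := by omega
  have hrL : r ≤ L := by omega
  have hTf'card : r ≤ (Tf.filter (fun k => L < k)).card := by
    have hsplit := Finset.card_filter_add_card_filter_not
      (s := Tf) (p := fun k => L < k)
    rw [hcdef] at hsplit
    have hneg : (Tf.filter (fun a => ¬ L < a)).card ≤ L := by
      have hsub : Tf.filter (fun a => ¬ L < a) ⊆ Finset.Icc 1 L := by
        intro k hk
        rw [Finset.mem_filter, hTf, Finset.mem_filter, Finset.mem_Icc] at hk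
        rw [Finset.mem_Icc]
        exact ⟨hk.1.1.1, by omega⟩
      calc (Tf.filter (fun a => ¬ L < a)).card ≤ (Finset.Icc 1 L).card :=
            Finset.card_le_card hsub
        _ ≤ L := by rw [Nat.card_Icc]; omega
    omega
  obtain ⟨Ef, hEfsub, hEfcard⟩ :=
    Finset.exists_subset_card_eq hTf'card
  have hEfA : ∀ k ∈ Ef, k ∈ A := by
    intro k hk
    have := hEfsub hk
    rw [Finset.mem_filter, hTf, Finset.mem_filter] at this
    exact this.1.2
  have hEfL : ∀ k ∈ Ef, L < k := by
    intro k hk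
    have := hEfsub hk
    rw [Finset.mem_filter] at this
    exact this.2
  have hEfn : ∀ k ∈ Ef, 1 ≤ k ∧ k ≤ n := by
    intro k hk
    have := hEfsub hk
    rw [Finset.mem_filter, hTf, Finset.mem_filter, Finset.mem_Icc] at this
    exact this.1.1
  refine ⟨Ef, hEfA, ?_, ?_, ?_, ?_⟩
  · intro k hk
    have := hEfL k hk
    omega
  · intro k hk
    have := hEfL k hk
    rw [hEfcard]
    omega
  · rw [← Finset.card_pos, hEfcard]
    omega
  · have hstep : ∀ k ∈ Ef, ENNReal.ofReal (1/(n:ℝ)) ≤ A.indicator glam k := by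
      intro k hk
      rw [Set.indicator_of_mem (hEfA k hk)]
      exact lam_lower (hEfn k hk).1 (hEfn k hk).2
    calc ENNReal.ofReal (ε/4) ≤ ENNReal.ofReal ((r:ℝ) * (1/(n:ℝ))) := by
          apply ENNReal.ofReal_le_ofReal
          rw [mul_one_div, div_le_div_iff₀ (by norm_num) hnpos]
          have h4r : (c:ℝ) + 1 ≤ 4*(r:ℝ) := by
            have : c + 1 ≤ 4*r := by omega
            exact_mod_cast this
          nlinarith
      _ = (r : ℝ≥0∞) * ENNReal.ofReal (1/(n:ℝ)) := by
          rw [ENNReal.ofReal_mul (by positivity), ENNReal.ofReal_natCast]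
      _ = ∑ _k ∈ Ef, ENNReal.ofReal (1/(n:ℝ)) := by
          rw [Finset.sum_const, hEfcard, nsmul_eq_mul]
      _ ≤ ∑ k ∈ Ef, A.indicator glam k := Finset.sum_le_sum hstep

lemma fin_subset_Z (A : Set ℕ) (hfin : phi2 A < ⊤) :
    Filter.Tendsto (fun n : ℕ => ((A ∩ Set.Icc 1 n).ncard : ℝ) / n) Filter.atTop (nhds 0) := by
  classical
  rw [NormedAddCommGroup.tendsto_nhds_zero]
  intro ε hε
  by_contra hcon
  rw [Filter.not_eventually] at hcon
  have H : ∀ N : ℕ, ∃ n : ℕ, N ≤ n ∧ 1 ≤ n ∧ ε * n ≤ ((A ∩ Set.Icc 1 n).ncard : ℝ) := by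
    intro N
    obtain ⟨n, hn1, hn2⟩ := (hcon.and_eventually (Filter.eventually_ge_atTop (max N 1))).exists
    refine ⟨n, le_trans (le_max_left _ _) hn2, le_trans (le_max_right _ _) hn2, ?_⟩
    have hn1' : 1 ≤ n := le_trans (le_max_right _ _) hn2
    have hnpos : (0:ℝ) < n := by exact_mod_cast hn1'
    rw [Real.norm_eq_abs, abs_of_nonneg (by positivity), not_lt, le_div_iff₀ hnpos] at hn1
    linarith
  obtain ⟨R, hR⟩ := ENNReal.exists_nat_gt hfin.ne
  obtain ⟨m, hmdef⟩ : ∃ m : ℕ, m = Nat.ceil ((4*((R:ℝ)+1))/ε) + 1 := ⟨_, rfl⟩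
  choose Fp hFp1 hFp2 hFp3 hFp4 hFp5 using exists_piece A ε hε H
  let b : ℕ → ℕ := fun l => Nat.rec (m+1) (fun _ prev => (Fp prev).max' (hFp4 prev) + 1) l
  have hb0 : b 0 = m + 1 := rfl
  have hbsucc : ∀ l, b (l+1) = (Fp (b l)).max' (hFp4 (b l)) + 1 := fun l => rfl
  have helem : ∀ l, ∀ k ∈ Fp (b l), b l ≤ k ∧ k < b (l+1) := by
    intro l k hk
    refine ⟨hFp2 (b l) k hk, ?_⟩
    rw [hbsucc]
    have := Finset.le_max' _ k hk
    omega
  have hbmono : StrictMono b := by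
    apply strictMono_nat_of_lt_succ
    intro l
    obtain ⟨k, hk⟩ := hFp4 (b l)
    have h1 := helem l k hk
    omega
  set EE : Fin (m+1) → Finset ℕ := fun l => Fp (b (l:ℕ)) with hEE
  have hkey : ∀ x y : Fin (m+1), x < y → ∀ a ∈ EE x, ∀ c ∈ EE y, a < c := by
    intro x y hxy a ha c hc
    have h1 := (helem (x:ℕ) a ha).2
    have h2 := (helem (y:ℕ) c hc).1
    have hxy' : (x:ℕ) < (y:ℕ) := hxy
    have h3 : b ((x:ℕ)+1) ≤ b (y:ℕ) := hbmono.monotone (Nat.succ_le_of_lt hxy')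
    omega
  have hS2 : Finset.univ.biUnion EE ∈ S2 := by
    right
    refine ⟨m, EE, ?_, hkey, ?_, rfl⟩
    · intro l
      refine ⟨⟨?_, fun k hk => ?_⟩, hFp4 _⟩
      · intro h0
        have h1 := (helem _ 0 h0).1
        have h2 : b 0 ≤ b (l:ℕ) := hbmono.monotone (Nat.zero_le _)
        rw [hb0] at h2
        omega
      · exact hFp3 _ k hk
    · intro a ha
      have h1 := (helem 0 a ha).1
      rw [hb0] at h1
      omega
  have hdisj : (↑(Finset.univ : Finset (Fin (m+1))) : Set (Fin (m+1))).PairwiseDisjoint EE := by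
    intro x _ y _ hxy
    rcases lt_or_gt_of_ne hxy with h | h
    · exact Finset.disjoint_left.2 fun a ha ha' => absurd rfl (hkey x y h a ha a ha').ne
    · exact Finset.disjoint_left.2 fun a ha ha' => absurd rfl (hkey y x h a ha' a ha).ne
  have hsum : ((m+1 : ℕ) : ℝ≥0∞) * ENNReal.ofReal (ε/4)
      ≤ ∑ k ∈ Finset.univ.biUnion EE, A.indicator glam k := by
    rw [Finset.sum_biUnion hdisj]
    calc ((m+1:ℕ):ℝ≥0∞) * ENNReal.ofReal (ε/4)
        = ∑ _l : Fin (m+1), ENNReal.ofReal (ε/4) := by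
          rw [Finset.sum_const, Finset.card_univ, Fintype.card_fin, nsmul_eq_mul]
      _ ≤ ∑ l : Fin (m+1), ∑ k ∈ EE l, A.indicator glam k :=
          Finset.sum_le_sum fun l _ => hFp5 (b (l:ℕ))
  have hle := le_trans hsum (sum_le_phi2 A hS2)
  have harith : ((R:ℝ≥0∞) + 1) ≤ ((m+1 : ℕ) : ℝ≥0∞) * ENNReal.ofReal (ε/4) := by
    have hm4 : 4*((R:ℝ)+1) ≤ (m:ℝ) * ε := by
      have h1 : ((Nat.ceil ((4*((R:ℝ)+1))/ε) : ℕ) : ℝ) ≤ (m:ℝ) := by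
        exact_mod_cast (by omega : Nat.ceil ((4*((R:ℝ)+1))/ε) ≤ m)
      have h3 : 4*((R:ℝ)+1)/ε ≤ (m:ℝ) := le_trans (Nat.le_ceil _) h1
      rw [div_le_iff₀ hε] at h3
      linarith
    have hr1 : ((R:ℝ)+1) ≤ ((m+1:ℕ):ℝ) * (ε/4) := by
      push_cast
      nlinarith
    calc (R:ℝ≥0∞) + 1 = ENNReal.ofReal ((R:ℝ) + 1) := by
          rw [ENNReal.ofReal_add (by positivity) (by norm_num), ENNReal.ofReal_natCast,
            ENNReal.ofReal_one]
      _ ≤ ENNReal.ofReal (((m+1:ℕ):ℝ) * (ε/4)) := ENNReal.ofReal_le_ofReal hr1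
      _ = ((m+1 : ℕ) : ℝ≥0∞) * ENNReal.ofReal (ε/4) := by
          rw [ENNReal.ofReal_mul (by positivity), ENNReal.ofReal_natCast]
  have hfinal : (R:ℝ≥0∞) + 1 ≤ phi2 A := le_trans harith hle
  have : (R:ℝ≥0∞) < (R:ℝ≥0∞) + 1 :=
    ENNReal.lt_add_right (ENNReal.natCast_ne_top R) one_ne_zero
  exact absurd hR (not_lt.2 (le_trans this.le hfinal))

end Inclusions
theorem stmt15 :
    {A : Set ℕ | 0 ∉ A ∧ Tendsto (fun m : ℕ => phi2 (A \ Set.Iio m)) atTop (𝓝 0)} ⊂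
      {A : Set ℕ | 0 ∉ A ∧ phi2 A < ⊤} ∧
    {A : Set ℕ | 0 ∉ A ∧ phi2 A < ⊤} ⊂
      {A : Set ℕ | 0 ∉ A ∧
        Tendsto (fun n : ℕ => ((A ∩ Set.Icc 1 n).ncard : ℝ) / n) atTop (𝓝 0)} := by
  constructor
  · have hsub : {A : Set ℕ | 0 ∉ A ∧ Tendsto (fun m : ℕ => phi2 (A \ Set.Iio m)) atTop (𝓝 0)}
        ⊆ {A : Set ℕ | 0 ∉ A ∧ phi2 A < ⊤} := by
      rintro A ⟨h0, htd⟩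
      exact ⟨h0, exh_subset_fin A htd⟩
    refine (Set.ssubset_iff_of_subset hsub).2 ⟨A2, ⟨zero_not_mem_AA e2, ?_⟩, ?_⟩
    · exact lt_of_le_of_lt phi2_A2_le (lt_top_iff_ne_top.2 (by norm_num))
    · rintro ⟨-, htd⟩
      obtain ⟨m, hm⟩ := (htd.eventually_lt_const (by norm_num : (0:ℝ≥0∞) < 1)).exists
      exact (not_lt.2 (phi2_A2_tail m)) hm
  · have hsub : {A : Set ℕ | 0 ∉ A ∧ phi2 A < ⊤} ⊆ {A : Set ℕ | 0 ∉ A ∧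
        Tendsto (fun n : ℕ => ((A ∩ Set.Icc 1 n).ncard : ℝ) / n) atTop (𝓝 0)} := by
      rintro A ⟨h0, hfin⟩
      exact ⟨h0, fin_subset_Z A hfin⟩
    refine (Set.ssubset_iff_of_subset hsub).2 ⟨A4, ⟨zero_not_mem_AA e4, A4_density⟩, ?_⟩
    rintro ⟨-, hfin⟩
    rw [phi2_A4_eq_top] at hfin
    exact absurd hfin (lt_irrefl _)
end

section
/- Let μ be a finite signed Borel measure on the Cantor space ℕ → Bool (product topology). Then the total variation norm of μ, i.e. |μ|(ℕ → Bool), equals the supremum over all finite antichains A of binary strings of Σ_{t∈A} |μ([t])|. -/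
open MeasureTheory ENNReal

/-- The cylinder `[t]` determined by a binary string `t`. -/
def cyl (t : List Bool) : Set (ℕ → Bool) := {x | ∀ i : Fin t.length, x i = t.get i}

/-- A finite set of binary strings is an antichain if no member is a proper prefix of
another member. -/
def IsStringAntichain (A : Finset (List Bool)) : Prop :=
  ∀ s ∈ A, ∀ t ∈ A, s ≠ t → ¬ s <+: t


lemma cyl_mono {s t : List Bool} (h : s <+: t) : cyl t ⊆ cyl s := by
  intro x hx i
  obtain ⟨u, rfl⟩ := h
  have := hx ⟨i, by simp; omega⟩
  simpa [List.getElem_append, i.2] using this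

lemma prefix_of_inter {s t : List Bool} (hle : s.length ≤ t.length)
    (h : (cyl s ∩ cyl t).Nonempty) : s <+: t := by
  obtain ⟨x, hs, ht⟩ := h
  refine List.prefix_iff_eq_take.2 ?_
  apply List.ext_get (by simp [hle])
  intro i h1 h2
  have := hs ⟨i, h1⟩
  have := ht ⟨i, by omega⟩
  simp_all

def lengthN (n : ℕ) : Finset (List Bool) :=
  (Finset.univ : Finset (Fin n → Bool)).image List.ofFn

lemma mem_lengthN {n : ℕ} {t : List Bool} : t ∈ lengthN n ↔ t.length = n := by
  constructor
  · rintro ht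
    obtain ⟨f, _, rfl⟩ := Finset.mem_image.1 ht
    simp
  · rintro rfl
    refine Finset.mem_image.2 ⟨fun i => t.get (i.cast rfl), Finset.mem_univ _, ?_⟩
    apply List.ext_get (by simp)
    intro i h1 h2
    simp

lemma self_mem_cyl_ofFn (x : ℕ → Bool) (n : ℕ) : x ∈ cyl (List.ofFn (fun i : Fin n => x i)) := by
  intro i
  simp

/-- refine a finite union of cylinders to a union of cylinders of a common length `n`,
together with the complement. -/
lemma refine (F : Finset (List Bool)) {n : ℕ} (hn : ∀ s ∈ F, s.length ≤ n) :
    ∃ G : Finset (List Bool), G ⊆ lengthN n ∧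
      (⋃ t ∈ G, cyl t) = (⋃ s ∈ F, cyl s) ∧
      (⋃ t ∈ lengthN n \ G, cyl t) = (⋃ s ∈ F, cyl s)ᶜ := by
  classical
  set C := ⋃ s ∈ F, cyl s with hC
  refine ⟨(lengthN n).filter (fun t => cyl t ⊆ C), Finset.filter_subset _ _, ?_, ?_⟩
  · apply Set.Subset.antisymm
    · exact Set.iUnion₂_subset fun t ht => (Finset.mem_filter.1 ht).2
    · rintro x hx
      obtain ⟨s, hsF, hxs⟩ := Set.mem_iUnion₂.1 hx
      set t := List.ofFn (fun i : Fin n => x i) with ht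
      have hxt : x ∈ cyl t := self_mem_cyl_ofFn x n
      have hlt : t.length = n := by rw [ht]; simp
      have hpre : s <+: t := prefix_of_inter (by rw [hlt]; exact hn s hsF) ⟨x, hxs, hxt⟩
      have hsub : cyl t ⊆ C := (cyl_mono hpre).trans (Set.subset_biUnion_of_mem hsF)
      exact Set.mem_biUnion (Finset.mem_filter.2 ⟨mem_lengthN.2 hlt, hsub⟩) hxt
  · apply Set.Subset.antisymm
    · rintro x hx hxC
      obtain ⟨t, htG, hxt⟩ := Set.mem_iUnion₂.1 hx
      obtain ⟨s, hsF, hxs⟩ := Set.mem_iUnion₂.1 hxC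
      obtain ⟨htn, htnG⟩ := Finset.mem_sdiff.1 htG
      have hpre : s <+: t := prefix_of_inter
        (by rw [mem_lengthN.1 htn]; exact hn s hsF) ⟨x, hxs, hxt⟩
      exact htnG (Finset.mem_filter.2
        ⟨htn, (cyl_mono hpre).trans (Set.subset_biUnion_of_mem hsF)⟩)
    · rintro x hx
      set t := List.ofFn (fun i : Fin n => x i) with ht
      have hxt : x ∈ cyl t := self_mem_cyl_ofFn x n
      have htn : t ∈ lengthN n := mem_lengthN.2 (by rw [ht]; simp)
      refine Set.mem_biUnion (Finset.mem_sdiff.2 ⟨htn, fun hG => ?_⟩) hxt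
      exact hx ((Finset.mem_filter.1 hG).2 hxt)

lemma measurableSet_cyl (t : List Bool) : MeasurableSet (cyl t) := by
  have : cyl t = ⋂ i : Fin t.length, {x : ℕ → Bool | x i = t.get i} := by
    ext x; simp [cyl]
  rw [this]
  exact MeasurableSet.iInter fun i => measurableSet_eq_fun (measurable_pi_apply _) measurable_const

lemma isPiSystem_cyl : IsPiSystem (Set.range cyl) := by
  rintro _ ⟨s, rfl⟩ _ ⟨t, rfl⟩ hne
  rcases le_total s.length t.length with h | h
  · have hp := prefix_of_inter h hne
    exact ⟨t, by rw [Set.inter_eq_right.2 (cyl_mono hp)]⟩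
  · have hp := prefix_of_inter h (by rwa [Set.inter_comm])
    exact ⟨s, by rw [Set.inter_eq_left.2 (cyl_mono hp)]⟩

lemma eval_preimage_eq_iUnion (i : ℕ) (b : Bool) :
    {x : ℕ → Bool | x i = b} = ⋃ t ∈ (lengthN (i+1)).filter (fun t => t.getD i false = b), cyl t := by
  ext x
  simp only [Set.mem_setOf_eq, Set.mem_iUnion, Finset.mem_filter, mem_lengthN]
  constructor
  · intro hx
    refine ⟨List.ofFn (fun j : Fin (i+1) => x j), ⟨by simp, ?_⟩, self_mem_cyl_ofFn x (i+1)⟩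
    rw [List.getD_eq_getElem _ _ (by simp), List.getElem_ofFn]
    exact hx
  · rintro ⟨t, ⟨hlen, hb⟩, hx⟩
    have := hx ⟨i, by omega⟩
    rw [List.getD_eq_getElem _ _ (by omega)] at hb
    simp_all [List.get_eq_getElem]

lemma gen_eq : (inferInstance : MeasurableSpace (ℕ → Bool)) =
    MeasurableSpace.generateFrom (Set.range cyl) := by
  apply le_antisymm
  · rw [show (inferInstance : MeasurableSpace (ℕ → Bool)) = MeasurableSpace.pi from rfl,
      MeasurableSpace.pi]
    refine iSup_le fun i => ?_
    rw [MeasurableSpace.comap_le_iff_le_map]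
    intro s hs
    have : (fun x : ℕ → Bool => x i) ⁻¹' s = ⋃ b ∈ s, {x : ℕ → Bool | x i = b} := by
      ext x; simp
    show MeasurableSet[MeasurableSpace.generateFrom (Set.range cyl)]
      ((fun x : ℕ → Bool => x i) ⁻¹' s)
    rw [this]
    refine MeasurableSet.biUnion s.to_countable fun b _ => ?_
    rw [eval_preimage_eq_iUnion]
    exact MeasurableSet.biUnion (Finset.countable_toSet _) fun t _ =>
      MeasurableSpace.measurableSet_generateFrom ⟨t, rfl⟩
  · exact MeasurableSpace.generateFrom_le (by rintro _ ⟨t, rfl⟩; exact measurableSet_cyl t)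

/-- every measurable set can be approximated in measure by a finite union of cylinders. -/
lemma approx (ν : Measure (ℕ → Bool)) [IsFiniteMeasure ν] {S : Set (ℕ → Bool)}
    (hS : MeasurableSet S) {ε : ℝ≥0∞} (hε : 0 < ε) :
    ∃ F : Finset (List Bool), ν (symmDiff S (⋃ t ∈ F, cyl t)) < ε := by
  classical
  rcases eq_or_ne ε ⊤ with rfl | hεt
  · exact ⟨∅, lt_of_le_of_lt (measure_mono (Set.subset_univ _)) (measure_lt_top ν _)⟩
  revert hε hεt
  revert ε
  have key : ∀ ⦃S : Set (ℕ → Bool)⦄, MeasurableSet S →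
      (∀ ε : ℝ≥0∞, 0 < ε → ε ≠ ⊤ → ∃ F : Finset (List Bool),
        ν (symmDiff S (⋃ t ∈ F, cyl t)) < ε) := by
    apply MeasurableSpace.induction_on_inter
      (C := fun S _ => ∀ ε : ℝ≥0∞, 0 < ε → ε ≠ ⊤ → ∃ F : Finset (List Bool),
        ν (symmDiff S (⋃ t ∈ F, cyl t)) < ε) gen_eq isPiSystem_cyl
    · intro ε hε _
      exact ⟨∅, by simpa using hε⟩
    · rintro _ ⟨t, rfl⟩ ε hε _
      refine ⟨{t}, ?_⟩
      simpa [symmDiff_self] using hε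
    · intro S _ hP ε hε hεt
      obtain ⟨F, hF⟩ := hP ε hε hεt
      obtain ⟨n, hn⟩ : ∃ n, ∀ s ∈ F, s.length ≤ n :=
        ⟨F.sup List.length, fun s hs => Finset.le_sup hs⟩
      obtain ⟨G, hG, -, hGc⟩ := refine F hn
      exact ⟨lengthN n \ G, by rwa [hGc, compl_symmDiff_compl]⟩
    · intro f hdisj hmeas hP ε hε hεt
      have hsum : ∑' i, ν (f i) ≠ ⊤ := by
        rw [← measure_iUnion hdisj hmeas]
        exact (measure_lt_top ν _).ne
      have htail : Filter.Tendsto (fun N => ∑' i, ν (f (i + N))) Filter.atTop (nhds 0) :=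
        ENNReal.tendsto_sum_nat_add _ hsum
      have hhalf : 0 < ε / 2 := ENNReal.div_pos hε.ne' (by norm_num)
      obtain ⟨N, hN⟩ := (htail.eventually_lt_const hhalf).exists
      set δ : ℝ≥0∞ := ε / 2 / (N + 1) with hδdef
      have hNtop : ((N : ℝ≥0∞) + 1) ≠ ⊤ := by simp
      have hδ : 0 < δ := ENNReal.div_pos hhalf.ne' hNtop
      have hδt : δ ≠ ⊤ :=
        (ENNReal.div_lt_top (ENNReal.div_lt_top hεt (by norm_num)).ne (by simp)).ne
      choose Fi hFi using fun i : ℕ => hP i δ hδ hδt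
      refine ⟨(Finset.range N).biUnion Fi, ?_⟩
      set C := ⋃ t ∈ (Finset.range N).biUnion Fi, cyl t with hCdef
      set Ci : ℕ → Set (ℕ → Bool) := fun i => ⋃ t ∈ Fi i, cyl t with hCidef
      have hCeq : C = ⋃ i ∈ Finset.range N, Ci i := by
        rw [hCdef, Finset.set_biUnion_biUnion]
      have hsubset : symmDiff (⋃ i, f i) C ⊆
          (⋃ i ∈ Finset.range N, symmDiff (f i) (Ci i)) ∪ ⋃ i, f (i + N) := by
        rintro x hx
        rcases hx with ⟨hxS, hxC⟩ | ⟨hxC, hxS⟩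
        · obtain ⟨i, hxi⟩ := Set.mem_iUnion.1 hxS
          rcases lt_or_ge i N with hiN | hiN
          · refine Or.inl (Set.mem_biUnion (Finset.mem_range.2 hiN) ?_)
            refine Or.inl ⟨hxi, fun hxCi => hxC ?_⟩
            rw [hCeq]
            exact Set.mem_biUnion (Finset.mem_range.2 hiN) hxCi
          · exact Or.inr (Set.mem_iUnion.2 ⟨i - N, by rwa [Nat.sub_add_cancel hiN]⟩)
        · rw [hCeq] at hxC
          obtain ⟨i, hiN, hxi⟩ := Set.mem_iUnion₂.1 hxC
          refine Or.inl (Set.mem_biUnion hiN ?_)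
          exact Or.inr ⟨hxi, fun hxf => hxS (Set.mem_iUnion.2 ⟨i, hxf⟩)⟩
      calc ν (symmDiff (⋃ i, f i) C)
          ≤ ν ((⋃ i ∈ Finset.range N, symmDiff (f i) (Ci i)) ∪ ⋃ i, f (i + N)) :=
            measure_mono hsubset
        _ ≤ ν (⋃ i ∈ Finset.range N, symmDiff (f i) (Ci i)) + ν (⋃ i, f (i + N)) :=
            measure_union_le _ _
        _ ≤ (∑ i ∈ Finset.range N, ν (symmDiff (f i) (Ci i))) + ν (⋃ i, f (i + N)) := by
            gcongr
            exact measure_biUnion_finset_le _ _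
        _ ≤ (∑ _i ∈ Finset.range N, δ) + ν (⋃ i, f (i + N)) := by
            gcongr with i hi
            exact (hFi i).le
        _ ≤ ε / 2 + ν (⋃ i, f (i + N)) := by
            gcongr
            rw [Finset.sum_const, Finset.card_range, nsmul_eq_mul]
            calc (N : ℝ≥0∞) * δ ≤ ((N : ℝ≥0∞) + 1) * δ := by gcongr; exact le_self_add
              _ = ε / 2 := ENNReal.mul_div_cancel' (by simp) (fun h => absurd h hNtop)
        _ < ε / 2 + ε / 2 := by
            refine ENNReal.add_lt_add_left (ENNReal.div_lt_top hεt (by norm_num)).ne ?_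
            exact lt_of_le_of_lt (measure_iUnion_le _) hN
        _ = ε := ENNReal.add_halves ε
  exact fun {ε} hε hεt => key hS ε hε hεt

lemma disjoint_cyl {s t : List Bool} (h1 : ¬ s <+: t) (h2 : ¬ t <+: s) :
    Disjoint (cyl s) (cyl t) := by
  rw [Set.disjoint_iff_inter_eq_empty]
  by_contra h
  have hne : (cyl s ∩ cyl t).Nonempty := Set.nonempty_iff_ne_empty.2 h
  rcases le_total s.length t.length with hl | hl
  · exact h1 (prefix_of_inter hl hne)
  · exact h2 (prefix_of_inter hl (by rwa [Set.inter_comm]))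

lemma disjoint_cyl_lengthN {n : ℕ} {s t : List Bool} (hs : s ∈ lengthN n) (ht : t ∈ lengthN n)
    (hne : s ≠ t) : Disjoint (cyl s) (cyl t) := by
  have hls := mem_lengthN.1 hs
  have hlt := mem_lengthN.1 ht
  refine disjoint_cyl (fun h => hne (h.eq_of_length (by omega))) (fun h => hne (h.eq_of_length (by omega)).symm)

section main
variable (μ : MeasureTheory.SignedMeasure (ℕ → Bool))

lemma mu_apply {s : Set (ℕ → Bool)} (hs : MeasurableSet s) :
    μ s = (μ.toJordanDecomposition.posPart s).toReal
      - (μ.toJordanDecomposition.negPart s).toReal := by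
  conv_lhs => rw [← μ.toSignedMeasure_toJordanDecomposition]
  rw [JordanDecomposition.toSignedMeasure, Measure.toSignedMeasure_sub_apply hs]
  rfl

lemma mu_biUnion (H : Finset (List Bool))
    (hd : ∀ s ∈ H, ∀ t ∈ H, s ≠ t → Disjoint (cyl s) (cyl t)) :
    μ (⋃ t ∈ H, cyl t) = ∑ t ∈ H, μ (cyl t) := by
  haveI := μ.toJordanDecomposition.posPart_finite
  haveI := μ.toJordanDecomposition.negPart_finite
  set p := μ.toJordanDecomposition.posPart
  set q := μ.toJordanDecomposition.negPart
  have hdp : (↑H : Set (List Bool)).PairwiseDisjoint cyl := fun s hs t ht hst => hd s hs t ht hst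
  have hm : ∀ t ∈ H, MeasurableSet (cyl t) := fun t _ => measurableSet_cyl t
  have hmU : MeasurableSet (⋃ t ∈ H, cyl t) := MeasurableSet.biUnion H.countable_toSet hm
  rw [mu_apply μ hmU, measure_biUnion_finset hdp hm, measure_biUnion_finset hdp hm,
    ENNReal.toReal_sum (fun t _ => (measure_lt_top p _).ne),
    ENNReal.toReal_sum (fun t _ => (measure_lt_top q _).ne), ← Finset.sum_sub_distrib]
  exact Finset.sum_congr rfl fun t ht => (mu_apply μ (measurableSet_cyl t)).symm

lemma ofReal_abs_biUnion_le (H : Finset (List Bool))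
    (hd : ∀ s ∈ H, ∀ t ∈ H, s ≠ t → Disjoint (cyl s) (cyl t)) :
    ENNReal.ofReal |μ (⋃ t ∈ H, cyl t)| ≤ ∑ t ∈ H, ENNReal.ofReal |μ (cyl t)| := by
  rw [mu_biUnion μ H hd]
  calc ENNReal.ofReal |∑ t ∈ H, μ (cyl t)| ≤ ENNReal.ofReal (∑ t ∈ H, |μ (cyl t)|) :=
        ENNReal.ofReal_le_ofReal (Finset.abs_sum_le_sum_abs _ _)
    _ = ∑ t ∈ H, ENNReal.ofReal |μ (cyl t)| :=
        ENNReal.ofReal_sum_of_nonneg fun t _ => abs_nonneg _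

end main

theorem stmt16 (μ : MeasureTheory.SignedMeasure (ℕ → Bool)) :
    μ.totalVariation Set.univ =
      ⨆ (A : Finset (List Bool)) (_ : IsStringAntichain A),
        ∑ t ∈ A, ENNReal.ofReal |μ (cyl t)| := by
  classical
  haveI := μ.toJordanDecomposition.posPart_finite
  haveI := μ.toJordanDecomposition.negPart_finite
  set p := μ.toJordanDecomposition.posPart with hp
  set q := μ.toJordanDecomposition.negPart with hq
  have htv : ∀ s, μ.totalVariation s = p s + q s := fun s => rfl
  apply le_antisymm
  · -- hard direction
    refine ENNReal.le_of_forall_pos_le_add fun ε hε _ => ?_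
    obtain ⟨S, hSm, hpS, hqSc⟩ := μ.toJordanDecomposition.mutuallySingular
    have hε4 : (0:ℝ≥0∞) < (ε : ℝ≥0∞) / 4 := by
      refine ENNReal.div_pos (by exact_mod_cast hε.ne') (by norm_num)
    obtain ⟨F, hF⟩ := approx (p + q) hSm hε4
    obtain ⟨n, hn⟩ : ∃ n, ∀ s ∈ F, s.length ≤ n :=
      ⟨F.sup List.length, fun s hs => Finset.le_sup hs⟩
    obtain ⟨G, hG, hGeq, hGc⟩ := refine F hn
    set C : Set (ℕ → Bool) := ⋃ s ∈ F, cyl s with hC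
    have hCm : MeasurableSet C :=
      MeasurableSet.biUnion F.countable_toSet fun t _ => measurableSet_cyl t
    have hCcm : MeasurableSet Cᶜ := hCm.compl
    -- ENNReal bounds from the approximation
    have key : ∀ T : Set (ℕ → Bool), T ⊆ symmDiff S C →
        p T ≤ (ε : ℝ≥0∞) / 4 ∧ q T ≤ (ε : ℝ≥0∞) / 4 := by
      intro T hT
      constructor
      · refine le_trans ?_ hF.le
        refine le_trans ?_ (measure_mono hT)
        rw [Measure.add_apply]; exact le_self_add
      · refine le_trans ?_ hF.le
        refine le_trans ?_ (measure_mono hT)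
        rw [Measure.add_apply]; exact le_add_self
    have hsub1 : S \ C ⊆ symmDiff S C := fun x hx => Or.inl hx
    have hsub2 : C \ S ⊆ symmDiff S C := fun x hx => Or.inr hx
    have h1 : q S ≤ q C + (ε : ℝ≥0∞) / 4 :=
      (measure_le_inter_add_diff q S C).trans
        (add_le_add (measure_mono Set.inter_subset_right) (key _ hsub1).2)
    have h2 : p C ≤ (ε : ℝ≥0∞) / 4 := by
      refine (measure_le_inter_add_diff p C S).trans ?_
      have : p (C ∩ S) = 0 := measure_mono_null Set.inter_subset_right hpS
      rw [this, zero_add]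
      exact (key _ hsub2).1
    have hdiffeq : Sᶜ \ Cᶜ = C \ S := by ext x; simp [Set.mem_diff]; tauto
    have h3 : p Set.univ ≤ p Cᶜ + (ε : ℝ≥0∞) / 4 := by
      have hpuniv : p Set.univ ≤ p Sᶜ := by
        have := measure_union_le (μ := p) S Sᶜ
        rwa [Set.union_compl_self, hpS, zero_add] at this
      refine hpuniv.trans ((measure_le_inter_add_diff p Sᶜ Cᶜ).trans ?_)
      rw [hdiffeq]
      exact add_le_add (measure_mono Set.inter_subset_right) (key _ hsub2).1
    have h4 : q Cᶜ ≤ (ε : ℝ≥0∞) / 4 := by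
      refine (measure_le_inter_add_diff q Cᶜ S).trans ?_
      have he1 : Cᶜ ∩ S = S \ C := by ext x; simp [Set.mem_diff]; tauto
      have he2 : q (Cᶜ \ S) = 0 := measure_mono_null (Set.diff_subset_iff.2 (by simp)) hqSc
      rw [he1, he2, add_zero]
      exact (key _ hsub1).2
    have hquniv : q Set.univ ≤ q S := by
      have := measure_union_le (μ := q) S Sᶜ
      rwa [Set.union_compl_self, hqSc, add_zero] at this
    -- pass to real numbers
    have hetop : ((ε : ℝ≥0∞) / 4) ≠ ⊤ := (ENNReal.div_lt_top ENNReal.coe_ne_top (by norm_num)).ne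
    have heval : ((ε : ℝ≥0∞) / 4).toReal = (ε : ℝ) / 4 := by
      rw [ENNReal.toReal_div]; norm_num
    have r1 : (q S).toReal ≤ (q C).toReal + (ε : ℝ) / 4 := by
      have := ENNReal.toReal_mono (ENNReal.add_ne_top.2 ⟨measure_ne_top q C, hetop⟩) h1
      rwa [ENNReal.toReal_add (measure_ne_top q C) hetop, heval] at this
    have r2 : (p C).toReal ≤ (ε : ℝ) / 4 := by
      have := ENNReal.toReal_mono hetop h2
      rwa [heval] at this
    have r3 : (p Set.univ).toReal ≤ (p Cᶜ).toReal + (ε : ℝ) / 4 := by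
      have := ENNReal.toReal_mono (ENNReal.add_ne_top.2 ⟨measure_ne_top p Cᶜ, hetop⟩) h3
      rwa [ENNReal.toReal_add (measure_ne_top p Cᶜ) hetop, heval] at this
    have r4 : (q Cᶜ).toReal ≤ (ε : ℝ) / 4 := by
      have := ENNReal.toReal_mono hetop h4
      rwa [heval] at this
    have r5 : (q Set.univ).toReal ≤ (q S).toReal :=
      ENNReal.toReal_mono (measure_ne_top q S) hquniv
    have hμC : μ C = (p C).toReal - (q C).toReal := mu_apply μ hCm
    have hμCc : μ Cᶜ = (p Cᶜ).toReal - (q Cᶜ).toReal := mu_apply μ hCcm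
    have habs : (p Set.univ).toReal + (q Set.univ).toReal ≤ |μ C| + |μ Cᶜ| + (ε : ℝ) := by
      have a1 : -(μ C) ≤ |μ C| := neg_le_abs _
      have a2 : μ Cᶜ ≤ |μ Cᶜ| := le_abs_self _
      nlinarith [r1, r2, r3, r4, r5, hμC, hμCc]
    -- antichain of all strings of length n
    have hanti : IsStringAntichain (lengthN n) := by
      intro s hs t ht hst hpre
      exact hst (hpre.eq_of_length (by rw [mem_lengthN.1 hs, mem_lengthN.1 ht]))
    have hsum1 : ENNReal.ofReal |μ C| ≤ ∑ t ∈ G, ENNReal.ofReal |μ (cyl t)| := by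
      rw [← hGeq]
      exact ofReal_abs_biUnion_le μ G fun s hs t ht hst =>
        disjoint_cyl_lengthN (hG hs) (hG ht) hst
    have hsum2 : ENNReal.ofReal |μ Cᶜ| ≤
        ∑ t ∈ lengthN n \ G, ENNReal.ofReal |μ (cyl t)| := by
      rw [← hGc]
      exact ofReal_abs_biUnion_le μ _ fun s hs t ht hst =>
        disjoint_cyl_lengthN (Finset.mem_sdiff.1 hs).1 (Finset.mem_sdiff.1 ht).1 hst
    calc μ.totalVariation Set.univ = p Set.univ + q Set.univ := htv _
      _ = ENNReal.ofReal ((p Set.univ).toReal + (q Set.univ).toReal) := by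
          rw [ENNReal.ofReal_add ENNReal.toReal_nonneg ENNReal.toReal_nonneg,
            ENNReal.ofReal_toReal (measure_ne_top p _), ENNReal.ofReal_toReal (measure_ne_top q _)]
      _ ≤ ENNReal.ofReal (|μ C| + |μ Cᶜ| + (ε : ℝ)) := ENNReal.ofReal_le_ofReal habs
      _ ≤ ENNReal.ofReal |μ C| + ENNReal.ofReal |μ Cᶜ| + ENNReal.ofReal (ε : ℝ) :=
          le_trans (ENNReal.ofReal_add_le) (add_le_add_left ENNReal.ofReal_add_le _)
      _ ≤ (∑ t ∈ G, ENNReal.ofReal |μ (cyl t)| +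
            ∑ t ∈ lengthN n \ G, ENNReal.ofReal |μ (cyl t)|) + (ε : ℝ≥0∞) := by
          rw [ENNReal.ofReal_coe_nnreal]
          exact add_le_add_left (add_le_add hsum1 hsum2) _
      _ = (∑ t ∈ lengthN n, ENNReal.ofReal |μ (cyl t)|) + (ε : ℝ≥0∞) := by
          rw [add_comm (∑ t ∈ G, _), Finset.sum_sdiff hG]
      _ ≤ (⨆ (A : Finset (List Bool)) (_ : IsStringAntichain A),
            ∑ t ∈ A, ENNReal.ofReal |μ (cyl t)|) + (ε : ℝ≥0∞) := by
          gcongr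
          exact le_iSup₂ (f := fun (A : Finset (List Bool)) (_ : IsStringAntichain A) =>
            ∑ t ∈ A, ENNReal.ofReal |μ (cyl t)|) (lengthN n) hanti
  · refine iSup_le fun A => iSup_le fun hA => ?_
    have hd : ∀ s ∈ A, ∀ t ∈ A, s ≠ t → Disjoint (cyl s) (cyl t) := fun s hs t ht hst =>
      disjoint_cyl (hA s hs t ht hst) (hA t ht s hs hst.symm)
    calc ∑ t ∈ A, ENNReal.ofReal |μ (cyl t)|
        ≤ ∑ t ∈ A, (p + q) (cyl t) := by
          refine Finset.sum_le_sum fun t ht => ?_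
          rw [mu_apply μ (measurableSet_cyl t)]
          refine ENNReal.ofReal_le_of_le_toReal ?_
          rw [Measure.add_apply, ENNReal.toReal_add (measure_lt_top p _).ne (measure_lt_top q _).ne]
          exact (abs_sub _ _).trans (by
            rw [abs_of_nonneg ENNReal.toReal_nonneg, abs_of_nonneg ENNReal.toReal_nonneg])
      _ = (p + q) (⋃ t ∈ A, cyl t) :=
          (measure_biUnion_finset (fun s hs t ht hst => hd s hs t ht hst)
            (fun t _ => measurableSet_cyl t)).symm
      _ ≤ (p + q) Set.univ := measure_mono (Set.subset_univ _)
      _ = μ.totalVariation Set.univ := (htv _).symm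
end

section
/- There exists a set A ⊆ ℕ∖{0} such that P([A]_δ) = 0 (so A belongs to the trace of the null ideal) while φ₂(A ∖ [0,m)) ≥ 1 for every m ∈ ℕ; in particular the trace of the null ideal is not contained in the second Schreier ideal 𝓘₂ = Exh(φ₂). -/
open Filter Topology ENNReal

/-- The canonical bijection from binary strings onto `ℕ∖{0}`, sending the strings of
length `n` onto `[2^n, 2^{n+1})`. -/
def code (t : List Bool) : ℕ :=
  2 ^ t.length + ∑ i : Fin t.length, if t.get i then 2 ^ (i : ℕ) else 0

/-- The initial string of `x` of length `n`. -/
def restr (x : ℕ → Bool) (n : ℕ) : List Bool := List.ofFn fun i : Fin n => x i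

/-- The `G_δ`-closure `[A]_δ = {x : e(x↾n) ∈ A for infinitely many n}`. -/
def Gdel (A : Set ℕ) : Set (ℕ → Bool) := {x | {n : ℕ | code (restr x n) ∈ A}.Infinite}


lemma code_restr (x : ℕ → Bool) (n : ℕ) :
    code (restr x n) = 2 ^ n + ∑ i ∈ Finset.range n, (if x i then 2 ^ i else 0) := by
  unfold code restr
  rw [← Fin.sum_univ_eq_sum_range (fun i => if x i then 2^i else 0) n]
  simp [List.get_ofFn]
  exact Finset.sum_equiv (finCongr (by simp)) (by simp) (by simp)

lemma sum_bits_lt (x : ℕ → Bool) (n : ℕ) :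
    (∑ i ∈ Finset.range n, (if x i then 2 ^ i else 0)) < 2 ^ n := by
  calc (∑ i ∈ Finset.range n, (if x i then 2 ^ i else 0))
      ≤ ∑ i ∈ Finset.range n, 2 ^ i := Finset.sum_le_sum (by intro i _; split <;> simp)
    _ = 2 ^ n - 1 := by rw [Nat.geomSum_eq (le_refl 2)]; omega
    _ < 2 ^ n := by have := Nat.one_le_two_pow (n := n); omega

lemma bits_false {x : ℕ → Bool} {n J : ℕ} (hJ : J ≤ n)
    (hdvd : 2 ^ J ∣ (2 ^ n + ∑ i ∈ Finset.range n, (if x i then 2 ^ i else 0)))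
    {i : ℕ} (hi : i < J) : x i = false := by
  have h1 : 2 ^ J ∣ (∑ i ∈ Finset.range n, (if x i then 2 ^ i else 0)) :=
    (Nat.dvd_add_right (pow_dvd_pow 2 hJ)).mp hdvd
  rw [← Finset.sum_range_add_sum_Ico _ hJ] at h1
  have h2 : 2 ^ J ∣ (∑ i ∈ Finset.Ico J n, (if x i then 2 ^ i else 0)) := by
    apply Finset.dvd_sum
    intro k hk
    split
    · exact pow_dvd_pow 2 (Finset.mem_Ico.mp hk).1
    · exact dvd_zero _
  have h3 : 2 ^ J ∣ (∑ i ∈ Finset.range J, (if x i then 2 ^ i else 0)) :=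
    (Nat.dvd_add_left h2).mp h1
  have h4 : (∑ i ∈ Finset.range J, (if x i then 2 ^ i else 0)) = 0 :=
    Nat.eq_zero_of_dvd_of_lt h3 (sum_bits_lt x J)
  have h5 := (Finset.sum_eq_zero_iff.mp h4) i (Finset.mem_range.mpr hi)
  by_contra hb
  simp [Bool.not_eq_false] at hb
  simp [hb] at h5

/-- The block of level `2^m + j` used in the Schreier-2 witness. -/
def Eblock (m j : ℕ) : Finset ℕ :=
  (Finset.range (2 ^ (2 ^ m + j - m))).image (fun q => 2 ^ (2 ^ m + j) + q * 2 ^ m)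

lemma m_le (m j : ℕ) : m ≤ 2 ^ m + j := le_trans (Nat.lt_two_pow_self (n := m)).le (Nat.le_add_right _ _)

lemma Eblock_bounds {m j k : ℕ} (hk : k ∈ Eblock m j) :
    2 ^ (2 ^ m + j) ≤ k ∧ k < 2 ^ (2 ^ m + j + 1) := by
  simp only [Eblock, Finset.mem_image, Finset.mem_range] at hk
  obtain ⟨q, hq, rfl⟩ := hk
  constructor
  · exact Nat.le_add_right _ _
  · have h : q * 2 ^ m < 2 ^ (2 ^ m + j - m) * 2 ^ m :=
      Nat.mul_lt_mul_of_lt_of_le hq (le_refl _) (Nat.two_pow_pos m)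
    rw [← pow_add, Nat.sub_add_cancel (m_le m j)] at h
    rw [pow_succ]
    omega

lemma Eblock_log {m j k : ℕ} (hk : k ∈ Eblock m j) : Nat.log 2 k = 2 ^ m + j :=
  Nat.log_eq_of_pow_le_of_lt_pow (Eblock_bounds hk).1 (Eblock_bounds hk).2

lemma Eblock_card (m j : ℕ) : (Eblock m j).card = 2 ^ (2 ^ m + j - m) := by
  rw [Eblock, Finset.card_image_of_injective _ ?_, Finset.card_range]
  intro a b hab
  simp only at hab
  have := Nat.two_pow_pos m
  exact Nat.eq_of_mul_eq_mul_right this (by omega)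

lemma Eblock_S1 (m j : ℕ) : Eblock m j ∈ S1 := by
  constructor
  · intro h
    have := (Eblock_bounds h).1
    have := Nat.two_pow_pos (2 ^ m + j)
    omega
  · intro k hk
    calc (Eblock m j).card = 2 ^ (2 ^ m + j - m) := Eblock_card m j
      _ ≤ 2 ^ (2 ^ m + j) := Nat.pow_le_pow_right (by norm_num) (Nat.sub_le _ _)
      _ ≤ k := (Eblock_bounds hk).1

lemma Eblock_nonempty (m j : ℕ) : (Eblock m j).Nonempty := by
  refine ⟨2 ^ (2 ^ m + j) + 0 * 2 ^ m, ?_⟩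
  simp only [Eblock, Finset.mem_image, Finset.mem_range]
  exact ⟨0, Nat.two_pow_pos _, rfl⟩

/-- The witness set `A`. -/
def Aset : Set ℕ := {k | 2 ≤ k ∧ 2 ^ Nat.log 2 (Nat.log 2 k) ∣ k}

lemma Eblock_mem_A {m j k : ℕ} (hj : j < 2 ^ m) (hk : k ∈ Eblock m j) : k ∈ Aset := by
  have hb := Eblock_bounds hk
  constructor
  · have : 2 ^ 1 ≤ 2 ^ (2 ^ m + j) := Nat.pow_le_pow_right (by norm_num)
      (by have := Nat.two_pow_pos m; omega)
    omega
  · rw [Eblock_log hk]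
    have hlog : Nat.log 2 (2 ^ m + j) = m := by
      apply Nat.log_eq_of_pow_le_of_lt_pow (Nat.le_add_right _ _)
      rw [pow_succ]; omega
    rw [hlog]
    simp only [Eblock, Finset.mem_image, Finset.mem_range] at hk
    obtain ⟨q, hq, rfl⟩ := hk
    exact dvd_add (pow_dvd_pow 2 (m_le m j)) (Dvd.intro q (mul_comm _ _))

lemma ofReal_lam {k n : ℕ} (h : Nat.log 2 k = n) :
    ENNReal.ofReal (lam k) = (2 : ℝ≥0∞)⁻¹ ^ n := by
  rw [lam, h, ENNReal.ofReal_pow (by norm_num)]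
  congr 1
  rw [ENNReal.ofReal_div_of_pos] <;> norm_num

lemma Eblock_sum (m j : ℕ) :
    ∑ k ∈ Eblock m j, ENNReal.ofReal (lam k) = (2 : ℝ≥0∞)⁻¹ ^ m := by
  rw [Finset.sum_congr rfl (fun k hk => ofReal_lam (Eblock_log hk)), Finset.sum_const,
    Eblock_card, nsmul_eq_mul]
  push_cast
  rw [show (2:ℝ≥0∞)⁻¹ ^ (2 ^ m + j) = 2⁻¹ ^ (2 ^ m + j - m) * 2⁻¹ ^ m from by
    rw [← pow_add, Nat.sub_add_cancel (m_le m j)]]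
  rw [← mul_assoc, ← mul_pow, ENNReal.mul_inv_cancel (by norm_num) (by norm_num), one_pow,
    one_mul]

lemma pairwise_disj (m : ℕ) (M : ℕ) :
    Set.PairwiseDisjoint (↑(Finset.univ : Finset (Fin (M + 1))))
      (fun j : Fin (M+1) => Eblock m j.val) := by
  have key : ∀ j k : Fin (M+1), j < k → Disjoint (Eblock m j.val) (Eblock m k.val) := by
    intro j k h
    refine Finset.disjoint_left.mpr fun a haj hak => ?_
    have h1 := (Eblock_bounds haj).2
    have h2 := (Eblock_bounds hak).1
    have h3 : 2 ^ (2 ^ m + j.val + 1) ≤ 2 ^ (2 ^ m + k.val) :=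
      Nat.pow_le_pow_right (by norm_num) (by have := Fin.lt_iff_val_lt_val.mp h; omega)
    omega
  intro j _ k _ hjk
  rcases Ne.lt_or_gt hjk with h | h
  · exact key j k h
  · exact (key k j h).symm

lemma phi2_ge (m : ℕ) : 1 ≤ phi2 (Aset \ Set.Iio m) := by
  have hM : 2 ^ m - 1 + 1 = 2 ^ m := Nat.succ_pred_eq_of_pos (Nat.two_pow_pos m)
  set M := 2 ^ m - 1 with hMdef
  set E : Fin (M + 1) → Finset ℕ := fun j => Eblock m j.val with hE
  set F : Finset ℕ := Finset.univ.biUnion E with hF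
  have hjlt : ∀ j : Fin (M + 1), (j : ℕ) < 2 ^ m := fun j => by have := j.isLt; omega
  have hFS2 : F ∈ S2 := by
    refine Or.inr ⟨M, E, fun j => ⟨Eblock_S1 m j.val, Eblock_nonempty m j.val⟩, ?_, ?_, rfl⟩
    · intro j k hjk a ha b hb
      have h1 := (Eblock_bounds ha).2
      have h2 := (Eblock_bounds hb).1
      have h3 : 2 ^ (2 ^ m + j.val + 1) ≤ 2 ^ (2 ^ m + k.val) :=
        Nat.pow_le_pow_right (by norm_num) (by have := Fin.lt_iff_val_lt_val.mp hjk; omega)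
      omega
    · intro a ha
      have h2 := (Eblock_bounds ha).1
      have h0 : ((0 : Fin (M + 1)) : ℕ) = 0 := rfl
      rw [h0] at h2
      have h3 : 2 ^ m ≤ 2 ^ (2 ^ m + 0) := Nat.pow_le_pow_right (by norm_num)
        (by have := Nat.lt_two_pow_self (n := m); omega)
      omega
  have hmem : ∀ j : Fin (M+1), ∀ k ∈ E j, k ∈ Aset \ Set.Iio m := by
    intro j k hk
    refine ⟨Eblock_mem_A (hjlt j) hk, ?_⟩
    have h2 := (Eblock_bounds hk).1
    have h3 : 2 ^ m ≤ 2 ^ (2 ^ m + j.val) := Nat.pow_le_pow_right (by norm_num)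
      (by have := Nat.lt_two_pow_self (n := m); omega)
    have h4 := Nat.lt_two_pow_self (n := m)
    simp only [Set.mem_Iio, not_lt]
    omega
  have hsum : ∑ k ∈ F, (Aset \ Set.Iio m).indicator (fun k => ENNReal.ofReal (lam k)) k = 1 := by
    rw [hF, Finset.sum_biUnion (pairwise_disj m M)]
    have : ∀ j : Fin (M+1), ∑ k ∈ E j, (Aset \ Set.Iio m).indicator
        (fun k => ENNReal.ofReal (lam k)) k = (2:ℝ≥0∞)⁻¹ ^ m := by
      intro j
      rw [Finset.sum_congr rfl (fun k hk => Set.indicator_of_mem (hmem j k hk) _)]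
      exact Eblock_sum m j.val
    rw [Finset.sum_congr rfl (fun j _ => this j), Finset.sum_const, Finset.card_univ,
      Fintype.card_fin, nsmul_eq_mul, hM]
    push_cast
    rw [← mul_pow, ENNReal.mul_inv_cancel (by norm_num) (by norm_num), one_pow]
  calc (1:ℝ≥0∞) = ∑ k ∈ F, (Aset \ Set.Iio m).indicator (fun k => ENNReal.ofReal (lam k)) k :=
        hsum.symm
    _ ≤ phi2 (Aset \ Set.Iio m) := le_iSup₂_of_le F hFS2 (le_refl _)

lemma log_code_restr (x : ℕ → Bool) (n : ℕ) : Nat.log 2 (code (restr x n)) = n := by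
  rw [code_restr]
  refine Nat.log_eq_of_pow_le_of_lt_pow (Nat.le_add_right _ _) ?_
  have := sum_bits_lt x n
  rw [pow_succ]
  omega

lemma gdel_false {x : ℕ → Bool} (hx : x ∈ Gdel Aset) (i : ℕ) : x i = false := by
  obtain ⟨n, hn, hni⟩ := hx.exists_gt (2 ^ (i + 1))
  have hn2 : n ≠ 0 := by have := Nat.two_pow_pos (i+1); omega
  obtain ⟨-, hdvd⟩ := hn
  rw [log_code_restr] at hdvd
  have hiJ : i < Nat.log 2 n := by
    have : i + 1 ≤ Nat.log 2 n := (Nat.le_log_iff_pow_le (by norm_num) hn2).mpr hni.le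
    omega
  rw [code_restr] at hdvd
  exact bits_false (Nat.log_le_self 2 n) hdvd hiJ

theorem stmt17 (P : MeasureTheory.Measure (ℕ → Bool))
    [MeasureTheory.IsProbabilityMeasure P]
    (hP : ∀ t : List Bool, P (cyl t) = (1 / 2 : ℝ≥0∞) ^ t.length) :
    ∃ A : Set ℕ, 0 ∉ A ∧ P (Gdel A) = 0 ∧
      (∀ m : ℕ, 1 ≤ phi2 (A \ Set.Iio m)) ∧
      ¬ Filter.Tendsto (fun m : ℕ => phi2 (A \ Set.Iio m)) Filter.atTop (𝓝 0) := by
  refine ⟨Aset, fun h => by exact absurd h.1 (by norm_num), ?_, phi2_ge, ?_⟩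
  · have hle : ∀ n : ℕ, P (Gdel Aset) ≤ (1 / 2 : ℝ≥0∞) ^ n := by
      intro n
      have hsub : Gdel Aset ⊆ cyl (List.replicate n false) := by
        intro x hx i
        rw [List.get_eq_getElem, List.getElem_replicate]
        exact gdel_false hx i
      calc P (Gdel Aset) ≤ P (cyl (List.replicate n false)) := MeasureTheory.measure_mono hsub
        _ = (1 / 2 : ℝ≥0∞) ^ n := by rw [hP]; simp
    have htend : Tendsto (fun n : ℕ => (1 / 2 : ℝ≥0∞) ^ n) atTop (𝓝 0) :=
      ENNReal.tendsto_pow_atTop_nhds_zero_of_lt_one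
        (by rw [one_div]; exact ENNReal.inv_lt_one.mpr one_lt_two)
    exact le_antisymm (ge_of_tendsto' htend hle) zero_le
  · intro h
    obtain ⟨m, hm⟩ := (h.eventually_lt_const (show (0:ℝ≥0∞) < 1 by norm_num)).exists
    exact absurd (phi2_ge m) (not_le.mpr hm)
end

section
/- Let 𝓕 be a hereditary family of finite subsets of ℕ covering ℕ. Let (x_n) be a sequence of functions ℕ → ℝ with Φ_𝓕(x_n) < ∞ for every n and with pairwise disjoint supports (the sets {k : x_n(k) ≠ 0} are pairwise disjoint). Suppose A ⊆ ℕ belongs to the topological closure of 𝓕 in the Cantor space and limsup_n Φ_𝓕(P_A x_n) > 0. Then there exist ε > 0, a set B ⊆ A belonging to the closure of 𝓕, and an infinite set I ⊆ ℕ such that for every n ∈ I the series Σ_{k∈B} x_n(k) converges absolutely and |Σ_{k∈B} x_n(k)| > ε. -/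
open Filter Topology ENNReal

open Classical in
/-- The characteristic function of a set of naturals, as an element of the Cantor space. -/
noncomputable def chi (A : Set ℕ) : ℕ → Bool := fun n => decide (n ∈ A)

/-- A set in the Cantor space is F_σ if it is a countable union of closed sets. -/
def IsFsigma (S : Set (ℕ → Bool)) : Prop :=
  ∃ C : ℕ → Set (ℕ → Bool), (∀ n, IsClosed (C n)) ∧ S = ⋃ n, C n

/-- `𝓕` is precompact: every member of the closure of `𝓕` in the Cantor space is finite. -/
def Precompact (𝓕 : Set (Set ℕ)) : Prop :=
  ∀ g ∈ closure (chi '' 𝓕), {n | g n = true}.Finite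

/-- `φ_{𝓕,τ}(A) = sup_{F ∈ 𝓕} Σ_{i ∈ F ∩ A} τ i`. -/
noncomputable def phiFam (𝓕 : Set (Set ℕ)) (τ : ℕ → ℝ) (A : Set ℕ) : ℝ≥0∞ :=
  ⨆ F ∈ 𝓕, ∑' i : ↥(F ∩ A), ENNReal.ofReal (τ i)

/-- The `𝓕`-ideal `𝓘_{𝓕,τ} = Exh(φ_{𝓕,τ})`. -/
def idealFam (𝓕 : Set (Set ℕ)) (τ : ℕ → ℝ) : Set (Set ℕ) :=
  {A | Tendsto (fun n : ℕ => phiFam 𝓕 τ (A \ Set.Iio n)) atTop (𝓝 0)}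

/-- `Φ_𝓕(x) = sup_{F ∈ 𝓕} Σ_{i ∈ F} |x i|`. -/
noncomputable def PhiFam (𝓕 : Set (Set ℕ)) (x : ℕ → ℝ) : ℝ≥0∞ :=
  ⨆ F ∈ 𝓕, ∑' i : F, ENNReal.ofReal |x i|

/-- Every finite subset of a set in the closure of a hereditary family belongs to the family. -/
lemma aux_finset_mem (𝓕 : Set (Set ℕ))
    (hher : ∀ F ∈ 𝓕, ∀ G ⊆ F, G ∈ 𝓕)
    (A : Set ℕ) (hA : chi A ∈ closure (chi '' 𝓕))
    (S : Finset ℕ) (hS : ↑S ⊆ A) : (↑S : Set ℕ) ∈ 𝓕 := by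
  have hU : IsOpen {g : ℕ → Bool | ∀ i ∈ S, g i = chi A i} := by
    have he : {g : ℕ → Bool | ∀ i ∈ S, g i = chi A i}
        = ⋂ i ∈ S, (fun g : ℕ → Bool => g i) ⁻¹' {chi A i} := by
      ext g; simp
    rw [he]
    exact isOpen_biInter_finset fun i _ =>
      (continuous_apply i).isOpen_preimage _ (isOpen_discrete _)
  have hmem : chi A ∈ {g : ℕ → Bool | ∀ i ∈ S, g i = chi A i} := fun i _ => rfl
  obtain ⟨g, hg1, F, hF, rfl⟩ := (mem_closure_iff.mp hA) _ hU hmem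
  refine hher F hF _ ?_
  intro i hi
  have hiS : i ∈ S := hi
  have h1 : chi F i = chi A i := hg1 i hiS
  have h2 : chi A i = true := by
    simp only [chi, decide_eq_true_iff]
    exact hS hi
  have h3 : chi F i = true := h1.trans h2
  simpa only [chi, decide_eq_true_iff] using h3

/-- Any subset of a set in the closure of a hereditary family lies in the closure. -/
lemma aux_closure (𝓕 : Set (Set ℕ))
    (hher : ∀ F ∈ 𝓕, ∀ G ⊆ F, G ∈ 𝓕)
    (A : Set ℕ) (hA : chi A ∈ closure (chi '' 𝓕))
    (B : Set ℕ) (hB : B ⊆ A) : chi B ∈ closure (chi '' 𝓕) := by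
  classical
  have key : ∀ N : ℕ, chi (↑((Finset.range N).filter (· ∈ B))) ∈ chi '' 𝓕 := by
    intro N
    refine Set.mem_image_of_mem _ ?_
    apply aux_finset_mem 𝓕 hher A hA
    intro i hi
    simp only [Finset.coe_filter, Set.mem_setOf_eq, Finset.mem_range] at hi
    exact hB hi.2
  refine mem_closure_of_tendsto (b := atTop)
    (f := fun N => chi (↑((Finset.range N).filter (· ∈ B)))) ?_
    (Filter.Eventually.of_forall key)
  rw [tendsto_pi_nhds]
  intro k
  refine Tendsto.congr' ?_ tendsto_const_nhds
  filter_upwards [Filter.eventually_ge_atTop (k + 1)] with N hN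
  simp only [chi]
  rw [decide_eq_decide]
  simp only [Finset.coe_filter, Set.mem_setOf_eq, Finset.mem_range]
  constructor
  · intro h; exact ⟨lt_of_lt_of_le (Nat.lt_succ_self k) hN, h⟩
  · intro h; exact h.2

theorem stmt18 (𝓕 : Set (Set ℕ))
    (hfin : ∀ F ∈ 𝓕, F.Finite) (hcov : ∀ n : ℕ, ∃ F ∈ 𝓕, n ∈ F)
    (hher : ∀ F ∈ 𝓕, ∀ G ⊆ F, G ∈ 𝓕)
    (x : ℕ → ℕ → ℝ) (hx : ∀ n, PhiFam 𝓕 (x n) < ⊤)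
    (hdisj : Pairwise (Function.onFun Disjoint fun n => Function.support (x n)))
    (A : Set ℕ) (hA : chi A ∈ closure (chi '' 𝓕))
    (hlim : 0 < Filter.limsup (fun n => PhiFam 𝓕 (Set.indicator A (x n))) atTop) :
    ∃ ε : ℝ, 0 < ε ∧ ∃ B ⊆ A, chi B ∈ closure (chi '' 𝓕) ∧
      ∃ I : Set ℕ, I.Infinite ∧ ∀ n ∈ I,
        (Summable fun k : B => |x n k|) ∧ ε < |∑' k : B, x n k| := by
  classical
  obtain ⟨c, hc0, hclt⟩ := exists_between hlim
  have hcT : c ≠ ⊤ := hclt.ne_top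
  set δ := c.toReal with hδdef
  have hδ : 0 < δ := ENNReal.toReal_pos hc0.ne' hcT
  have hfreq : ∃ᶠ n in atTop, c < PhiFam 𝓕 (A.indicator (x n)) :=
    Filter.frequently_lt_of_lt_limsup (by isBoundedDefault) hclt
  set I : Set ℕ := {n | c < PhiFam 𝓕 (A.indicator (x n))} with hIdef
  have hI : I.Infinite := Nat.frequently_atTop_iff_infinite.mp hfreq
  have hP : ∀ n ∈ I, ∃ G : Finset ℕ, ↑G ⊆ A ∧ (∀ i ∈ G, x n i ≠ 0) ∧
      δ / 2 < |∑ i ∈ G, x n i| := by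
    intro n hn
    have hn' : c < PhiFam 𝓕 (A.indicator (x n)) := hn
    rw [PhiFam, lt_iSup_iff] at hn'
    obtain ⟨F, hn'⟩ := hn'
    rw [lt_iSup_iff] at hn'
    obtain ⟨hF, hn'⟩ := hn'
    have hFf : F.Finite := hfin F hF
    have hSfin : {i | i ∈ F ∧ i ∈ A ∧ x n i ≠ 0}.Finite := hFf.subset fun i hi => hi.1
    set T := hSfin.toFinset with hTdef
    have hT : ∀ i ∈ T, i ∈ F ∧ i ∈ A ∧ x n i ≠ 0 := fun i hi => hSfin.mem_toFinset.mp hi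
    have h1 : ∑' i : F, ENNReal.ofReal |A.indicator (x n) i| =
        ∑ i ∈ T, ENNReal.ofReal |x n i| := by
      rw [tsum_subtype F fun i => ENNReal.ofReal |A.indicator (x n) i|]
      rw [tsum_eq_sum (s := T) ?_]
      · refine Finset.sum_congr rfl ?_
        intro i hi
        obtain ⟨hiF, hiA, _⟩ := hT i hi
        rw [Set.indicator_of_mem hiF, Set.indicator_of_mem hiA]
      · intro b hb
        by_cases hbF : b ∈ F
        · rw [Set.indicator_of_mem hbF]
          by_cases hbA : b ∈ A
          · have hbx : x n b = 0 := by
              by_contra hx0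
              exact hb (hSfin.mem_toFinset.mpr ⟨hbF, hbA, hx0⟩)
            rw [Set.indicator_of_mem hbA, hbx]
            simp
          · rw [Set.indicator_of_notMem hbA]
            simp
        · rw [Set.indicator_of_notMem hbF]
    rw [h1, ← ENNReal.ofReal_sum_of_nonneg (fun i _ => abs_nonneg _)] at hn'
    have hδT : δ < ∑ i ∈ T, |x n i| := (ENNReal.lt_ofReal_iff_toReal_lt hcT).mp hn'
    set Tp := T.filter (fun i => 0 < x n i) with hTp
    set Tm := T.filter (fun i => ¬ 0 < x n i) with hTm
    have hsplit : ∑ i ∈ Tp, |x n i| + ∑ i ∈ Tm, |x n i| = ∑ i ∈ T, |x n i| :=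
      Finset.sum_filter_add_sum_filter_not T _ _
    rcases lt_or_ge (δ / 2) (∑ i ∈ Tp, |x n i|) with h | h
    · refine ⟨Tp, ?_, ?_, ?_⟩
      · intro i hi
        exact (hT i (Finset.mem_of_mem_filter i (Finset.mem_coe.mp hi))).2.1
      · intro i hi
        exact (hT i (Finset.mem_of_mem_filter i hi)).2.2
      · have habs : ∑ i ∈ Tp, x n i = ∑ i ∈ Tp, |x n i| :=
          Finset.sum_congr rfl fun i hi => (abs_of_pos (Finset.mem_filter.mp hi).2).symm
        rw [habs, abs_of_nonneg (Finset.sum_nonneg fun i _ => abs_nonneg _)]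
        exact h
    · have hm : δ / 2 < ∑ i ∈ Tm, |x n i| := by linarith
      refine ⟨Tm, ?_, ?_, ?_⟩
      · intro i hi
        exact (hT i (Finset.mem_of_mem_filter i (Finset.mem_coe.mp hi))).2.1
      · intro i hi
        exact (hT i (Finset.mem_of_mem_filter i hi)).2.2
      · have hneg : ∀ i ∈ Tm, x n i < 0 := by
          intro i hi
          have h2 := (Finset.mem_filter.mp hi).2
          have hne := (hT i (Finset.mem_of_mem_filter i hi)).2.2
          exact lt_of_le_of_ne (not_lt.mp h2) hne
        have habs : ∑ i ∈ Tm, x n i = -∑ i ∈ Tm, |x n i| := by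
          rw [← Finset.sum_neg_distrib]
          refine Finset.sum_congr rfl ?_
          intro i hi
          rw [abs_of_neg (hneg i hi), neg_neg]
        rw [habs, abs_neg, abs_of_nonneg (Finset.sum_nonneg fun i _ => abs_nonneg _)]
        exact hm
  choose! G hG1 hG2 hG3 using hP
  set B : Set ℕ := ⋃ n ∈ I, (↑(G n) : Set ℕ) with hBdef
  have hBA : B ⊆ A := Set.iUnion₂_subset fun n hn => hG1 n hn
  refine ⟨δ / 2, half_pos hδ, B, hBA, aux_closure 𝓕 hher A hA B hBA, I, hI, ?_⟩
  intro n hn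
  have hkey : ∀ k, x n k ≠ 0 → (k ∈ B ↔ k ∈ G n) := by
    intro k hk
    constructor
    · intro hkB
      obtain ⟨m, hm, hkG⟩ := Set.mem_iUnion₂.mp hkB
      rcases eq_or_ne m n with rfl | hmn
      · exact hkG
      · exfalso
        have hm1 : k ∈ Function.support (x m) := hG2 m hm k (Finset.mem_coe.mp hkG)
        have hm2 : k ∈ Function.support (x n) := hk
        exact Set.disjoint_left.mp (hdisj hmn) hm1 hm2
    · intro hkG
      exact Set.mem_iUnion₂.mpr ⟨n, hn, Finset.mem_coe.mpr hkG⟩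
  have hindB : B.indicator (x n) = (↑(G n) : Set ℕ).indicator (x n) := by
    funext k
    rcases eq_or_ne (x n k) 0 with hk | hk
    · simp only [Set.indicator_apply, hk]
      split_ifs <;> rfl
    · have h := hkey k hk
      by_cases h2 : k ∈ G n
      · rw [Set.indicator_of_mem (h.mpr h2), Set.indicator_of_mem (Finset.mem_coe.mpr h2)]
      · rw [Set.indicator_of_notMem (fun hB => h2 (h.mp hB)),
          Set.indicator_of_notMem (fun hc => h2 (Finset.mem_coe.mp hc))]
  have hindAbs : B.indicator (fun k => |x n k|) = (↑(G n) : Set ℕ).indicator (fun k => |x n k|) := by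
    funext k
    rcases eq_or_ne (x n k) 0 with hk | hk
    · simp only [Set.indicator_apply, hk, abs_zero]
      split_ifs <;> rfl
    · have h := hkey k hk
      by_cases h2 : k ∈ G n
      · rw [Set.indicator_of_mem (h.mpr h2), Set.indicator_of_mem (Finset.mem_coe.mpr h2)]
      · rw [Set.indicator_of_notMem (fun hB => h2 (h.mp hB)),
          Set.indicator_of_notMem (fun hc => h2 (Finset.mem_coe.mp hc))]
  constructor
  · have hs : Summable ((↑(G n) : Set ℕ).indicator (fun k => |x n k|)) := by
      refine summable_of_ne_finset_zero (s := G n) ?_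
      intro b hb
      exact Set.indicator_of_notMem (fun hc => hb (Finset.mem_coe.mp hc)) _
    rw [← hindAbs] at hs
    exact summable_subtype_iff_indicator.mpr hs
  · have htsum : ∑' k : B, x n k = ∑ i ∈ G n, x n i := by
      rw [tsum_subtype, hindB]
      rw [tsum_eq_sum (s := G n) ?_]
      · exact Finset.sum_congr rfl fun i hi => Set.indicator_of_mem (Finset.mem_coe.mpr hi) _
      · intro b hb
        exact Set.indicator_of_notMem (fun hc => hb (Finset.mem_coe.mp hc)) _
    rw [htsum]
    exact hG3 n hn
end
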